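/- arXiv:2301.03177 — 5 statements merged into one kernel-verified Lean document; each statement's English description precedes it below -/
import Mathlib

section
/- With the notation of the context, the following Waring-type polynomial identity holds in R[X_0, …, X_n]: D_a · X_0^{a_0} X_1^{a_1} ⋯ X_n^{a_n} = ∑_{Z_a ⊆ A ⊆ E_a, A ≠ {0,…,n}} ∑_{k ∈ K_A} ∑_{s ∈ S̄_A} C_{A,k,s} · (ℓ_{A,k,s})^d. -/
open Finset

noncomputable section WaringStmt1

variable {R : Type*} [CommRing R]

/-- The polynomial `F_i(y) = ∏_{j=1}^{m_i} (y − t^{a_i − 2j})` where `m_i = ⌊(a_i−1)/2⌋`;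
for `a_i ∈ {0,1,2}` (i.e. `m_i ≤ 0`) this is the empty product `1`. -/
def Ffun (t : R) (ai : ℕ) : Polynomial R :=
  ∏ j ∈ Finset.Icc 1 ((ai - 1) / 2), (Polynomial.X - Polynomial.C (t ^ (ai - 2 * j)))

/-- `Z_a`, the set of indices with `a_i = 0`. -/
def Zset (n : ℕ) (a : Fin (n + 1) → ℕ) : Finset (Fin (n + 1)) :=
  Finset.univ.filter fun i => a i = 0

/-- `E_a`, the set of indices with `a_i` even. -/
def Eset (n : ℕ) (a : Fin (n + 1) → ℕ) : Finset (Fin (n + 1)) :=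
  Finset.univ.filter fun i => Even (a i)

/-- `K_A`: the tuples `(k_i)_{i∉A}` with `0 ≤ k_i ≤ m_i = ⌊(a_i−1)/2⌋` for all `i ∉ A`,
encoded as functions on all of `Fin (n+1)` whose values on `A` are forced to be `0`. -/
def Kset (n : ℕ) (a : Fin (n + 1) → ℕ) (A : Finset (Fin (n + 1))) :
    Finset (Fin (n + 1) → ℕ) :=
  Fintype.piFinset fun i => if i ∈ A then {0} else Finset.range ((a i - 1) / 2 + 1)

/-- `S̄_A`: the sign tuples `(s_i)_{i∉A}` with `s_i ∈ {0,1}` and `s_i = 0` at the least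
index `i ∉ A`, encoded as functions on all of `Fin (n+1)` forced to be `0` on `A`. -/
def Sbar (n : ℕ) (A : Finset (Fin (n + 1))) : Finset (Fin (n + 1) → ℕ) :=
  Fintype.piFinset fun i =>
    if i ∈ A then {0} else if ∀ j, j ∉ A → i ≤ j then {0} else {0, 1}

/-- The linear form `ℓ_{A,k,s} = ∑_{i∉A} (−1)^{s_i} t^{k_i} X_i`. -/
def ellForm (n : ℕ) (t : R) (A : Finset (Fin (n + 1))) (k s : Fin (n + 1) → ℕ) :
    MvPolynomial (Fin (n + 1)) R :=
  ∑ i ∈ Aᶜ, MvPolynomial.C ((-1 : R) ^ s i * t ^ k i) * MvPolynomial.X i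

/-- `D_a = (−1)^{|Z_a|} · 2^n · (d choose a_0,…,a_n) · ∏_{i∉Z_a} F_i(t^{a_i})`. -/
def Dcoef (n : ℕ) (a : Fin (n + 1) → ℕ) (t : R) : R :=
  (-1) ^ (Zset n a).card * 2 ^ n * (Nat.multinomial Finset.univ a : R) *
    ∏ i ∈ (Zset n a)ᶜ, (Ffun t (a i)).eval (t ^ a i)

/-- `C_{A,k,s} = (−1)^{|A|} · 2^{|A|} · (−1)^{∑_{i∉A} a_i s_i} · ∏_{i∈A} F_i(1)
· ∏_{i∉A} c(y^{k_i}, F_i)`. -/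
def Ccoef (n : ℕ) (a : Fin (n + 1) → ℕ) (t : R) (A : Finset (Fin (n + 1)))
    (k s : Fin (n + 1) → ℕ) : R :=
  (-1) ^ A.card * 2 ^ A.card * (-1) ^ (∑ i ∈ Aᶜ, a i * s i) *
    (∏ i ∈ A, (Ffun t (a i)).eval 1) * ∏ i ∈ Aᶜ, (Ffun t (a i)).coeff (k i)

lemma Ffun_natDegree_le (t : R) (ai : ℕ) : (Ffun t ai).natDegree ≤ (ai - 1) / 2 := by
  unfold Ffun
  refine le_trans (Polynomial.natDegree_prod_le _ _) ?_
  refine le_trans (Finset.sum_le_sum fun j _ => Polynomial.natDegree_X_sub_C_le _) ?_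
  simp [Nat.card_Icc]

lemma Ffun_eval (t x : R) (ai : ℕ) :
    (Ffun t ai).eval x = ∑ j ∈ Finset.range ((ai - 1) / 2 + 1), (Ffun t ai).coeff j * x ^ j := by
  exact Polynomial.eval_eq_sum_range' (Nat.lt_succ_of_le (Ffun_natDegree_le t ai)) x

lemma Ffun_zero (t : R) : Ffun t 0 = 1 := by
  unfold Ffun; norm_num

lemma Ffun_eval_zero (t : R) {ai b : ℕ} (h1 : b ≠ 0) (h2 : b < ai) (hpar : Even (ai + b)) :
    (Ffun t ai).eval (t ^ b) = 0 := by
  have hp2 := Nat.even_iff.mp hpar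
  unfold Ffun
  rw [Polynomial.eval_prod]
  apply Finset.prod_eq_zero (i := (ai - b) / 2)
  · rw [Finset.mem_Icc]
    constructor <;> omega
  · have : ai - 2 * ((ai - b) / 2) = b := by omega
    rw [this]
    simp

set_option linter.unusedSectionVars false

section Aux
variable {ι : Type*} [DecidableEq ι]

lemma sum_powerset_neg_one_pow_card_R (x : Finset ι) :
    ∑ m ∈ x.powerset, (-1 : R) ^ m.card = if x = ∅ then 1 else 0 := by
  have h := Finset.sum_powerset_neg_one_pow_card (x := x)
  have : ((∑ m ∈ x.powerset, (-1 : ℤ) ^ m.card : ℤ) : R)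
      = ∑ m ∈ x.powerset, (-1 : R) ^ m.card := by push_cast; rfl
  rw [← this, h]
  split <;> simp

lemma alt_sum [Fintype ι] (Z W : Finset ι) (hZW : Z ⊆ W) :
    ∑ A ∈ Finset.univ.powerset.filter (fun A => Z ⊆ A ∧ A ⊆ W), ((-1 : R) ^ A.card)
      = if W = Z then (-1) ^ Z.card else 0 := by
  rw [Finset.sum_nbij' (i := fun A => A \ Z) (j := fun B => Z ∪ B) (t := (W \ Z).powerset)
    (g := fun B => (-1 : R) ^ (Z.card + B.card))]
  · simp_rw [pow_add]
    rw [← Finset.mul_sum, sum_powerset_neg_one_pow_card_R]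
    simp only [Finset.sdiff_eq_empty_iff_subset]
    by_cases h : W = Z
    · simp [h, pow_add]
    · rw [if_neg (fun hWZ : W ⊆ Z => h (le_antisymm hWZ hZW)), if_neg h, mul_zero]
  · intro A hA
    simp only [Finset.mem_filter, Finset.mem_powerset] at hA ⊢
    exact Finset.sdiff_subset_sdiff hA.2.2 le_rfl
  · intro B hB
    simp only [Finset.mem_filter, Finset.mem_powerset] at hB ⊢
    refine ⟨Finset.subset_univ _, Finset.subset_union_left, Finset.union_subset hZW ?_⟩
    exact hB.trans (Finset.sdiff_subset)
  · intro A hA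
    simp only [Finset.mem_filter, Finset.mem_powerset] at hA
    exact Finset.union_sdiff_of_subset hA.2.1
  · intro B hB
    simp only [Finset.mem_powerset] at hB
    exact Finset.union_sdiff_cancel_left (Finset.disjoint_left.mpr fun x hxZ hxB =>
      (Finset.mem_sdiff.mp (hB hxB)).2 hxZ)
  · intro A hA
    simp only [Finset.mem_filter, Finset.mem_powerset] at hA
    rw [← Finset.card_union_of_disjoint (Finset.disjoint_sdiff),
      Finset.union_sdiff_of_subset hA.2.1]

lemma even_sum_iff_even_card (s : Finset ι) (f : ι → ℕ) :
    Even (∑ i ∈ s, f i) ↔ Even ((s.filter fun i => ¬ Even (f i)).card) := by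
  classical
  induction s using Finset.cons_induction with
  | empty => simp
  | cons a s ha ih =>
    rw [Finset.sum_cons, Finset.filter_cons, Nat.even_add]
    by_cases hfa : Even (f a)
    · simp [hfa, ih]
    · have hc : (if ¬ Even (f a) then True else False) := by simp [hfa]
      simp only [hfa, not_false_eq_true, if_true]
      rw [Finset.card_cons, Nat.even_add_one, ← ih]
      tauto

end Aux

lemma multinomial_eq_of_support {ι : Type*} [DecidableEq ι] (s u : Finset ι) (hsu : s ⊆ u)
    (f : ι → ℕ) (h : ∀ i ∈ u, i ∉ s → f i = 0) :
    Nat.multinomial u f = Nat.multinomial s f := by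
  unfold Nat.multinomial
  rw [Finset.sum_subset hsu h, Finset.prod_subset hsu (fun i hi his => by rw [h i hi his]; simp)]

lemma piAntidiag_compl {ι : Type*} [Fintype ι] [DecidableEq ι] (A : Finset ι) (d : ℕ) :
    Finset.piAntidiag Aᶜ d
      = (Finset.piAntidiag Finset.univ d).filter (fun b => ∀ i ∈ A, b i = 0) := by
  ext b
  simp only [Finset.mem_piAntidiag, Finset.mem_filter, Finset.mem_compl]
  constructor
  · rintro ⟨hsum, hsupp⟩
    have h0 : ∀ i ∈ A, b i = 0 := fun i hi => by
      by_contra hne; exact (hsupp i hne) hi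
    refine ⟨⟨?_, fun i _ => Finset.mem_univ i⟩, h0⟩
    rw [← hsum]
    exact (Finset.sum_subset (Finset.subset_univ _) (fun i _ hi => h0 i (by simpa using hi))).symm
  · rintro ⟨⟨hsum, _⟩, h0⟩
    refine ⟨?_, fun i hne => by by_contra hA; exact hne (h0 i (by simpa using hA))⟩
    rw [← hsum]
    exact Finset.sum_subset (Finset.subset_univ _) (fun i _ hi => h0 i (by simpa using hi))

lemma ell_pow_expand (n : ℕ) (t : R) (A : Finset (Fin (n+1))) (k s : Fin (n+1) → ℕ) (d : ℕ) :
    ellForm n t A k s ^ d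
      = ∑ b ∈ Finset.piAntidiag Finset.univ d,
          if ∀ i ∈ A, b i = 0 then
            MvPolynomial.C ((Nat.multinomial Aᶜ b : R) * ∏ i ∈ Aᶜ, ((-1:R)^(s i) * t^(k i))^(b i))
              * ∏ i, MvPolynomial.X i ^ b i
          else 0 := by
  rw [ellForm, Finset.sum_pow_eq_sum_piAntidiag, piAntidiag_compl, Finset.sum_filter]
  refine Finset.sum_congr rfl fun b _ => ?_
  split
  case isFalse => rfl
  case isTrue h =>
    simp_rw [mul_pow (MvPolynomial.C ((-1:R)^ (s _) * t ^ k _)), ← MvPolynomial.C_pow]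
    rw [Finset.prod_mul_distrib,
      (map_prod (MvPolynomial.C : R →+* MvPolynomial (Fin (n+1)) R)
        (fun x => ((-1:R)^(s x) * t^(k x))^(b x)) Aᶜ).symm,
      ← MvPolynomial.C_eq_coe_nat, ← mul_assoc, ← MvPolynomial.C_mul]
    congr 1
    exact Finset.prod_subset (Finset.subset_univ _)
      (fun i _ hi => by rw [h i (by simpa using hi), pow_zero])

lemma inner_eval (n : ℕ) (a : Fin (n + 1) → ℕ) (t : R) (A : Finset (Fin (n + 1)))
    (b : Fin (n + 1) → ℕ) :
    ∑ k ∈ Kset n a A, ∑ s ∈ Sbar n A,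
        Ccoef n a t A k s * ((Nat.multinomial Aᶜ b : R) * ∏ i ∈ Aᶜ, ((-1:R)^(s i) * t^(k i))^(b i))
      = (-1) ^ A.card * 2 ^ A.card * (∏ i ∈ A, (Ffun t (a i)).eval 1)
        * (Nat.multinomial Aᶜ b : R)
        * (∏ i ∈ Aᶜ, (Ffun t (a i)).eval (t ^ (b i)))
        * (∏ i, if i ∈ A then (1:R) else if ∀ j, j ∉ A → i ≤ j then 1
            else (1 + (-1:R) ^ (a i + b i))) := by
  -- Step 1: rewrite each summand as c0 * Kp k * Sp s
  have step1 : ∀ k s : Fin (n+1) → ℕ,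
      Ccoef n a t A k s * ((Nat.multinomial Aᶜ b : R) * ∏ i ∈ Aᶜ, ((-1:R)^(s i) * t^(k i))^(b i))
      = ((-1) ^ A.card * 2 ^ A.card * (∏ i ∈ A, (Ffun t (a i)).eval 1)
          * (Nat.multinomial Aᶜ b : R))
        * (∏ i ∈ Aᶜ, (Ffun t (a i)).coeff (k i) * t ^ (k i * b i))
        * ((-1:R) ^ (∑ i ∈ Aᶜ, a i * s i) * ∏ i ∈ Aᶜ, (-1:R) ^ (s i * b i)) := by
    intro k s
    rw [Ccoef]
    have h1 : ∀ i ∈ Aᶜ, ((-1:R)^(s i) * t^(k i))^(b i)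
        = (-1:R)^(s i * b i) * t^(k i * b i) := by
      intro i _; rw [mul_pow, ← pow_mul, ← pow_mul]
    have h3 : (∏ i ∈ Aᶜ, (Ffun t (a i)).coeff (k i)) * (∏ i ∈ Aᶜ, t^(k i * b i))
        = ∏ i ∈ Aᶜ, ((Ffun t (a i)).coeff (k i) * t^(k i * b i)) :=
      Finset.prod_mul_distrib.symm
    rw [Finset.prod_congr rfl h1, Finset.prod_mul_distrib, ← h3]
    ring
  simp only [step1]
  simp only [← Finset.sum_mul, ← Finset.mul_sum]
  -- Step 2: evaluate the k-sum
  have hk : ∑ k ∈ Kset n a A, ∏ i ∈ Aᶜ, (Ffun t (a i)).coeff (k i) * t ^ (k i * b i)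
      = ∏ i ∈ Aᶜ, (Ffun t (a i)).eval (t ^ (b i)) := by
    have e1 : ∀ k ∈ Kset n a A, ∏ i ∈ Aᶜ, (Ffun t (a i)).coeff (k i) * t ^ (k i * b i)
        = ∏ i, (if i ∈ A then (1:R) else (Ffun t (a i)).coeff (k i) * t ^ (k i * b i)) := by
      intro k _
      have hcong : ∀ i ∈ Aᶜ, (Ffun t (a i)).coeff (k i) * t ^ (k i * b i)
          = (if i ∈ A then (1:R) else (Ffun t (a i)).coeff (k i) * t ^ (k i * b i)) := by
        intro i hi
        rw [if_neg (show ¬ i ∈ A by simpa using hi)]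
      rw [Finset.prod_congr rfl hcong]
      exact Finset.prod_subset (Finset.subset_univ _)
        (fun i _ hi => if_pos (by simpa using hi))
    rw [Finset.sum_congr rfl e1, Kset,
      ← Finset.prod_univ_sum (fun i => if i ∈ A then ({0} : Finset ℕ)
          else Finset.range ((a i - 1) / 2 + 1))
        (fun i j => if i ∈ A then (1:R) else (Ffun t (a i)).coeff j * t ^ (j * b i))]
    have h4 : ∀ i ∈ (Finset.univ : Finset (Fin (n+1))), i ∉ Aᶜ →
        (∑ j ∈ (if i ∈ A then ({0} : Finset ℕ) else Finset.range ((a i - 1)/2+1)),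
          if i ∈ A then (1:R) else (Ffun t (a i)).coeff j * t^(j * b i)) = 1 := by
      intro i _ hi
      have hiA : i ∈ A := by simpa using hi
      rw [if_pos hiA]
      simp [if_pos hiA]
    rw [← Finset.prod_subset (Finset.subset_univ Aᶜ) h4]
    refine Finset.prod_congr rfl fun i hi => ?_
    have hiA : ¬ i ∈ A := by simpa using hi
    rw [if_neg hiA, Ffun_eval]
    refine Finset.sum_congr rfl fun j _ => ?_
    rw [if_neg hiA, ← pow_mul]
    ring_nf
  -- Step 3: evaluate the s-sum
  have hs : ∑ s ∈ Sbar n A, ((-1:R) ^ (∑ i ∈ Aᶜ, a i * s i) * ∏ i ∈ Aᶜ, (-1:R) ^ (s i * b i))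
      = ∏ i, (if i ∈ A then (1:R) else if ∀ j, j ∉ A → i ≤ j then 1
          else (1 + (-1:R) ^ (a i + b i))) := by
    have e1 : ∀ s ∈ Sbar n A, (-1:R) ^ (∑ i ∈ Aᶜ, a i * s i) * ∏ i ∈ Aᶜ, (-1:R) ^ (s i * b i)
        = ∏ i, (if i ∈ A then (1:R) else (-1:R) ^ (s i * (a i + b i))) := by
      intro s _
      rw [← Finset.prod_pow_eq_pow_sum Aᶜ (fun i => a i * s i) (-1 : R),
        ← Finset.prod_mul_distrib]
      have h2 : ∀ i ∈ Aᶜ, ((-1:R) ^ (a i * s i)) * ((-1:R)^(s i * b i))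
          = (-1:R) ^ (s i * (a i + b i)) := by
        intro i _; rw [← pow_add]; congr 1; ring
      rw [Finset.prod_congr rfl h2]
      have hcong : ∀ i ∈ Aᶜ, (-1:R) ^ (s i * (a i + b i))
          = (if i ∈ A then (1:R) else (-1:R) ^ (s i * (a i + b i))) := by
        intro i hi
        rw [if_neg (show ¬ i ∈ A by simpa using hi)]
      rw [Finset.prod_congr rfl hcong]
      exact Finset.prod_subset (Finset.subset_univ _)
        (fun i _ hi => if_pos (by simpa using hi))
    rw [Finset.sum_congr rfl e1, Sbar,
      ← Finset.prod_univ_sum (fun i => if i ∈ A then ({0} : Finset ℕ)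
          else if ∀ j, j ∉ A → i ≤ j then {0} else {0, 1})
        (fun i j => if i ∈ A then (1:R) else (-1:R) ^ (j * (a i + b i)))]
    refine Finset.prod_congr rfl fun i _ => ?_
    by_cases hiA : i ∈ A
    · rw [if_pos hiA, if_pos hiA]
      simp [if_pos hiA]
    · rw [if_neg hiA, if_neg hiA]
      by_cases hmin : ∀ j, j ∉ A → i ≤ j
      · rw [if_pos hmin, if_pos hmin]
        simp [if_neg hiA]
      · rw [if_neg hmin, if_neg hmin]
        rw [Finset.sum_insert (by simp), Finset.sum_singleton, if_neg hiA, if_neg hiA]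
        norm_num
  rw [hk, hs]

lemma key_scalar (n : ℕ) (a : Fin (n + 1) → ℕ) (d : ℕ) (hd : d = ∑ i, a i) (hd1 : 1 ≤ d)
    (t : R) (b : Fin (n + 1) → ℕ) (hb : ∑ i, b i = d) :
    ∑ A ∈ Finset.univ.powerset.filter
        (fun A => Zset n a ⊆ A ∧ A ⊆ Eset n a ∧ A ≠ Finset.univ),
      (if ∀ i ∈ A, b i = 0 then
        ∑ k ∈ Kset n a A, ∑ s ∈ Sbar n A,
          Ccoef n a t A k s * ((Nat.multinomial Aᶜ b : R)
            * ∏ i ∈ Aᶜ, ((-1:R)^(s i) * t^(k i))^(b i))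
      else 0)
    = if b = a then Dcoef n a t else 0 := by
  classical
  rw [← Finset.sum_filter, Finset.filter_filter]
  rw [Finset.sum_congr rfl (fun A _ => inner_eval n a t A b)]
  by_cases hQ : ∀ i, Even (a i + b i)
  · -- parity holds everywhere
    set B : Finset (Fin (n+1)) := Finset.univ.filter (fun i => b i = 0) with hB
    set G : R := (2:R)^n * (Nat.multinomial Finset.univ b : R)
      * ∏ i, (Ffun t (a i)).eval (t ^ (b i)) with hG
    have hBne : ∃ i, b i ≠ 0 := by
      by_contra h
      push_neg at h
      rw [Finset.sum_congr rfl (fun i _ => h i), Finset.sum_const_zero] at hb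
      omega
    have hstep : ∀ A ∈ Finset.univ.powerset.filter
        (fun A => (Zset n a ⊆ A ∧ A ⊆ Eset n a ∧ A ≠ Finset.univ) ∧ ∀ i ∈ A, b i = 0),
        (-1) ^ A.card * 2 ^ A.card * (∏ i ∈ A, (Ffun t (a i)).eval 1)
          * (Nat.multinomial Aᶜ b : R)
          * (∏ i ∈ Aᶜ, (Ffun t (a i)).eval (t ^ (b i)))
          * (∏ i, if i ∈ A then (1:R) else if ∀ j, j ∉ A → i ≤ j then 1
              else (1 + (-1:R) ^ (a i + b i)))
        = (-1) ^ A.card * G := by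
      intro A hA
      rw [Finset.mem_filter] at hA
      obtain ⟨-, ⟨hZA, hAE, hAne⟩, hA0⟩ := hA
      have hAc : Aᶜ.Nonempty := by
        rw [Finset.nonempty_iff_ne_empty]
        intro h
        exact hAne (by rwa [Finset.compl_eq_empty_iff] at h)
      set μ := Aᶜ.min' hAc with hμ
      have hμmem : μ ∈ Aᶜ := Finset.min'_mem _ _
      have hμA : μ ∉ A := Finset.mem_compl.mp hμmem
      have hmincond : ∀ j, j ∉ A → μ ≤ j := fun j hj =>
        Finset.min'_le _ _ (Finset.mem_compl.mpr hj)
      -- (i) the sigma product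
      have hSig : (∏ i, if i ∈ A then (1:R) else if ∀ j, j ∉ A → i ≤ j then 1
          else (1 + (-1:R) ^ (a i + b i))) = 2 ^ (Aᶜ.card - 1) := by
        rw [← Finset.prod_subset (Finset.subset_univ Aᶜ)
          (fun i _ hi => if_pos (by simpa using hi))]
        have hcong : ∀ i ∈ Aᶜ, (if i ∈ A then (1:R) else if ∀ j, j ∉ A → i ≤ j then 1
            else (1 + (-1:R) ^ (a i + b i))) = (if i = μ then 1 else 2) := by
          intro i hi
          have hiA : i ∉ A := Finset.mem_compl.mp hi
          rw [if_neg hiA]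
          by_cases hiμ : i = μ
          · rw [if_pos hiμ, if_pos (hiμ ▸ hmincond)]
          · rw [if_neg hiμ, if_neg (fun hm : ∀ j, j ∉ A → i ≤ j =>
              hiμ (le_antisymm (hm μ hμA) (hmincond i hiA)))]
            rw [Even.neg_one_pow (hQ i)]
            norm_num
        rw [Finset.prod_congr rfl hcong, ← Finset.mul_prod_erase Aᶜ _ hμmem, if_pos rfl,
          one_mul]
        rw [Finset.prod_congr rfl (fun i hi =>
          if_neg (Finset.ne_of_mem_erase hi) : ∀ i ∈ Aᶜ.erase μ, _ = (2:R)),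
          Finset.prod_const, Finset.card_erase_of_mem hμmem]
      -- (ii) multinomial
      have hm : (Nat.multinomial Aᶜ b : R) = (Nat.multinomial Finset.univ b : R) := by
        rw [multinomial_eq_of_support Aᶜ Finset.univ (Finset.subset_univ _) b
          (fun i _ hi => hA0 i (by simpa using hi))]
      -- (iii) products of evals
      have hprod : (∏ i ∈ A, (Ffun t (a i)).eval 1)
          * (∏ i ∈ Aᶜ, (Ffun t (a i)).eval (t ^ (b i)))
          = ∏ i, (Ffun t (a i)).eval (t ^ (b i)) := by
        rw [Finset.prod_congr rfl (fun i hi => by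
          rw [hA0 i hi, pow_zero] :
          ∀ i ∈ A, (Ffun t (a i)).eval 1 = (Ffun t (a i)).eval (t ^ (b i)))]
        exact Finset.prod_mul_prod_compl A _
      -- (iv) powers of two
      have hpow : (2:R) ^ A.card * 2 ^ (Aᶜ.card - 1) = 2 ^ n := by
        rw [← pow_add]
        congr 1
        have h1 : A.card + Aᶜ.card = n + 1 := by
          rw [Finset.card_add_card_compl]; simp
        have h2 : 1 ≤ Aᶜ.card := Finset.card_pos.mpr hAc
        omega
      rw [hSig, hm, hG, ← hprod, ← hpow]
      ring
    rw [Finset.sum_congr rfl hstep, ← Finset.sum_mul]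
    have hpred : Finset.univ.powerset.filter
        (fun A => (Zset n a ⊆ A ∧ A ⊆ Eset n a ∧ A ≠ Finset.univ) ∧ ∀ i ∈ A, b i = 0)
        = Finset.univ.powerset.filter (fun A => Zset n a ⊆ A ∧ A ⊆ Eset n a ∩ B) := by
      apply Finset.filter_congr
      intro A _
      constructor
      · rintro ⟨⟨hZA, hAE, -⟩, hA0⟩
        exact ⟨hZA, Finset.subset_inter hAE (fun i hi =>
          Finset.mem_filter.mpr ⟨Finset.mem_univ i, hA0 i hi⟩)⟩
      · rintro ⟨hZA, hAEB⟩
        have hAB : ∀ i ∈ A, b i = 0 := fun i hi =>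
          (Finset.mem_filter.mp (Finset.mem_inter.mp (hAEB hi)).2).2
        refine ⟨⟨hZA, fun i hi => (Finset.mem_inter.mp (hAEB hi)).1, ?_⟩, hAB⟩
        intro hAu
        obtain ⟨i0, hi0⟩ := hBne
        exact hi0 (hAB i0 (hAu ▸ Finset.mem_univ i0))
    rw [hpred]
    by_cases hZEB : Zset n a ⊆ Eset n a ∩ B
    · rw [alt_sum _ _ hZEB]
      by_cases heq : Eset n a ∩ B = Zset n a
      · rw [if_pos heq]
        have hzero_iff : ∀ i, b i = 0 ↔ a i = 0 := by
          intro i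
          constructor
          · intro hbi
            have hiE : i ∈ Eset n a := Finset.mem_filter.mpr ⟨Finset.mem_univ i, by
              have := hQ i; rw [hbi, add_zero] at this; exact this⟩
            have hiB : i ∈ B := Finset.mem_filter.mpr ⟨Finset.mem_univ i, hbi⟩
            have : i ∈ Zset n a := heq ▸ Finset.mem_inter.mpr ⟨hiE, hiB⟩
            exact (Finset.mem_filter.mp this).2
          · intro hai
            have hiZ : i ∈ Zset n a := Finset.mem_filter.mpr ⟨Finset.mem_univ i, hai⟩
            have := (Finset.mem_inter.mp (hZEB hiZ)).2
            exact (Finset.mem_filter.mp this).2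
        by_cases hba : b = a
        · rw [if_pos hba]
          subst hba
          rw [hG, Dcoef]
          have hZprod : ∏ i, (Ffun t (b i)).eval (t ^ (b i))
              = ∏ i ∈ (Zset n b)ᶜ, (Ffun t (b i)).eval (t ^ (b i)) := by
            refine (Finset.prod_subset (Finset.subset_univ _) (fun i _ hi => ?_)).symm
            have : b i = 0 := by
              have : i ∈ Zset n b := by simpa using hi
              exact (Finset.mem_filter.mp this).2
            rw [this, Ffun_zero]
            simp
          rw [hZprod]
          ring
        · rw [if_neg hba]
          have hex : ∃ i, b i < a i := by
            by_contra h
            push_neg at h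
            exact hba (funext fun i =>
              ((Finset.sum_eq_sum_iff_of_le (fun i _ => h i)).mp
                (by rw [hb, hd]) i (Finset.mem_univ i)).symm)
          obtain ⟨i, hib⟩ := hex
          have hbne : b i ≠ 0 := fun h0 => by
            have : a i = 0 := (hzero_iff i).mp h0
            omega
          have hFz : (Ffun t (a i)).eval (t ^ (b i)) = 0 :=
            Ffun_eval_zero t hbne hib (hQ i)
          rw [hG, Finset.prod_eq_zero (Finset.mem_univ i) hFz]
          ring
      · rw [if_neg heq, zero_mul, if_neg ?_]
        intro hba
        apply heq
        ext i
        simp only [Finset.mem_inter, hB, Zset, Eset, Finset.mem_filter, Finset.mem_univ,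
          true_and]
        subst hba
        constructor
        · rintro ⟨-, h2⟩; exact h2
        · intro h; exact ⟨by rw [h]; exact Even.zero, h⟩
    · rw [Finset.filter_false_of_mem (fun A _ h => hZEB (h.1.trans h.2)),
        Finset.sum_empty, zero_mul, if_neg ?_]
      intro hba
      apply hZEB
      intro i hiZ
      have hai : a i = 0 := (Finset.mem_filter.mp hiZ).2
      subst hba
      refine Finset.mem_inter.mpr ⟨Finset.mem_filter.mpr ⟨Finset.mem_univ i, by
        rw [hai]; exact Even.zero⟩, Finset.mem_filter.mpr ⟨Finset.mem_univ i, hai⟩⟩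
  · -- some parity fails
    push_neg at hQ
    obtain ⟨i0, hi0⟩ := hQ
    have hba : b ≠ a := fun h => by
      subst h
      exact hi0 (by exact (Even.add_self _ : Even (b i0 + b i0)) )
    rw [if_neg hba]
    apply Finset.sum_eq_zero
    intro A hA
    rw [Finset.mem_filter] at hA
    obtain ⟨-, ⟨hZA, hAE, hAne⟩, hA0⟩ := hA
    set O : Finset (Fin (n+1)) := Finset.univ.filter (fun i => ¬ Even (a i + b i)) with hO
    have hOcard : Even O.card := by
      rw [← even_sum_iff_even_card]
      have : ∑ i, (a i + b i) = d + d := by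
        rw [Finset.sum_add_distrib, ← hd, hb]
      rw [this]
      exact Even.add_self d
    have hi0O : i0 ∈ O := Finset.mem_filter.mpr ⟨Finset.mem_univ i0, hi0⟩
    have hcard2 : 1 < O.card := by
      have h1 : 0 < O.card := Finset.card_pos.mpr ⟨i0, hi0O⟩
      obtain ⟨r, hr⟩ := hOcard
      omega
    obtain ⟨i1, hi1, i2, hi2, h12⟩ := Finset.one_lt_card.mp hcard2
    have hnotA : ∀ i ∈ O, i ∉ A := by
      intro i hiO hiA
      have hbi := hA0 i hiA
      have hEv : Even (a i) := by
        have := hAE hiA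
        simpa [Eset] using this
      exact (Finset.mem_filter.mp hiO).2 (by rw [hbi, add_zero]; exact hEv)
    have hex : ∃ i, i ∈ O ∧ i ∉ A ∧ ¬ (∀ j, j ∉ A → i ≤ j) := by
      by_cases hm1 : ∀ j, j ∉ A → i1 ≤ j
      · exact ⟨i2, hi2, hnotA i2 hi2, fun hm2 =>
          h12 (le_antisymm (hm1 i2 (hnotA i2 hi2)) (hm2 i1 (hnotA i1 hi1)))⟩
      · exact ⟨i1, hi1, hnotA i1 hi1, hm1⟩
    obtain ⟨i, hiO, hiA, hmin⟩ := hex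
    have hzero : (∏ i, if i ∈ A then (1:R) else if ∀ j, j ∉ A → i ≤ j then 1
        else (1 + (-1:R) ^ (a i + b i))) = 0 := by
      apply Finset.prod_eq_zero (Finset.mem_univ i)
      rw [if_neg hiA, if_neg hmin]
      have hodd : Odd (a i + b i) := Nat.not_even_iff_odd.mp (Finset.mem_filter.mp hiO).2
      rw [hodd.neg_one_pow]
      ring
    rw [hzero, mul_zero]


lemma sum_swap4 {α β γ δ M : Type*} [AddCommMonoid M] (sA : Finset α)
    (sK : α → Finset β) (sS : α → Finset γ) (sB : Finset δ)
    (f : α → β → γ → δ → M) :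
    ∑ A ∈ sA, ∑ k ∈ sK A, ∑ s ∈ sS A, ∑ b ∈ sB, f A k s b
      = ∑ b ∈ sB, ∑ A ∈ sA, ∑ k ∈ sK A, ∑ s ∈ sS A, f A k s b := by
  rw [Finset.sum_congr rfl (fun A _ => Finset.sum_congr rfl (fun k _ => Finset.sum_comm)),
    Finset.sum_congr rfl (fun A (_ : A ∈ sA) => Finset.sum_comm), Finset.sum_comm]

/-- **Theorem (Waring-type identity).** For a sequence `a = (a_0,…,a_n)` of nonnegative
integers with `d = |a| ≥ 1`, in `R[X_0,…,X_n]` one has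
`D_a · X_0^{a_0} ⋯ X_n^{a_n}
  = ∑_{Z_a ⊆ A ⊆ E_a, A ≠ {0,…,n}} ∑_{k ∈ K_A} ∑_{s ∈ S̄_A} C_{A,k,s} (ℓ_{A,k,s})^d`. -/
theorem waring_identity (n : ℕ) (a : Fin (n + 1) → ℕ) (d : ℕ) (hd : d = ∑ i, a i)
    (hd1 : 1 ≤ d) (t : R) :
    MvPolynomial.C (Dcoef n a t) * ∏ i, MvPolynomial.X i ^ a i =
      ∑ A ∈ Finset.univ.powerset.filter
          (fun A => Zset n a ⊆ A ∧ A ⊆ Eset n a ∧ A ≠ Finset.univ),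
        ∑ k ∈ Kset n a A, ∑ s ∈ Sbar n A,
          MvPolynomial.C (Ccoef n a t A k s) * ellForm n t A k s ^ d := by
  classical
  have hmem : a ∈ Finset.piAntidiag (Finset.univ : Finset (Fin (n + 1))) d := by
    rw [Finset.mem_piAntidiag]
    exact ⟨hd.symm, fun i _ => Finset.mem_univ i⟩
  have hexpand : ∀ (A : Finset (Fin (n+1))) (k s : Fin (n+1) → ℕ),
      MvPolynomial.C (Ccoef n a t A k s) * ellForm n t A k s ^ d
      = ∑ b ∈ Finset.piAntidiag Finset.univ d,
          (if ∀ i ∈ A, b i = 0 then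
            MvPolynomial.C (Ccoef n a t A k s * ((Nat.multinomial Aᶜ b : R)
              * ∏ i ∈ Aᶜ, ((-1:R)^(s i) * t^(k i))^(b i)))
              * ∏ i, MvPolynomial.X i ^ b i
          else 0) := by
    intro A k s
    rw [ell_pow_expand, Finset.mul_sum]
    refine Finset.sum_congr rfl fun b _ => ?_
    split
    · rw [← mul_assoc, ← MvPolynomial.C_mul]
    · rw [mul_zero]
  symm
  simp only [hexpand]
  rw [sum_swap4]
  have hper : ∀ b ∈ Finset.piAntidiag (Finset.univ : Finset (Fin (n + 1))) d,
      (∑ A ∈ Finset.univ.powerset.filter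
          (fun A => Zset n a ⊆ A ∧ A ⊆ Eset n a ∧ A ≠ Finset.univ),
        ∑ k ∈ Kset n a A, ∑ s ∈ Sbar n A,
          (if ∀ i ∈ A, b i = 0 then
            MvPolynomial.C (Ccoef n a t A k s * ((Nat.multinomial Aᶜ b : R)
              * ∏ i ∈ Aᶜ, ((-1:R)^(s i) * t^(k i))^(b i)))
              * ∏ i, MvPolynomial.X i ^ b i
          else 0))
      = if b = a then MvPolynomial.C (Dcoef n a t) * ∏ i, MvPolynomial.X i ^ b i
        else 0 := by
    intro b hb
    have hbsum : ∑ i, b i = d := (Finset.mem_piAntidiag.mp hb).1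
    have h1 : (∑ A ∈ Finset.univ.powerset.filter
          (fun A => Zset n a ⊆ A ∧ A ⊆ Eset n a ∧ A ≠ Finset.univ),
        ∑ k ∈ Kset n a A, ∑ s ∈ Sbar n A,
          (if ∀ i ∈ A, b i = 0 then
            MvPolynomial.C (Ccoef n a t A k s * ((Nat.multinomial Aᶜ b : R)
              * ∏ i ∈ Aᶜ, ((-1:R)^(s i) * t^(k i))^(b i)))
              * ∏ i, MvPolynomial.X i ^ b i
          else 0))
        = MvPolynomial.C (∑ A ∈ Finset.univ.powerset.filter
            (fun A => Zset n a ⊆ A ∧ A ⊆ Eset n a ∧ A ≠ Finset.univ),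
          (if ∀ i ∈ A, b i = 0 then
            ∑ k ∈ Kset n a A, ∑ s ∈ Sbar n A,
              Ccoef n a t A k s * ((Nat.multinomial Aᶜ b : R)
                * ∏ i ∈ Aᶜ, ((-1:R)^(s i) * t^(k i))^(b i))
          else 0)) * ∏ i, MvPolynomial.X i ^ b i := by
      rw [map_sum, Finset.sum_mul]
      refine Finset.sum_congr rfl fun A _ => ?_
      by_cases hp : ∀ i ∈ A, b i = 0
      · simp only [if_pos hp]
        rw [map_sum, Finset.sum_mul]
        refine Finset.sum_congr rfl fun k _ => ?_
        rw [map_sum, Finset.sum_mul]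
      · simp only [if_neg hp, Finset.sum_const_zero, map_zero, zero_mul]
    rw [h1, key_scalar n a d hd hd1 t b hbsum]
    split
    · rfl
    · rw [map_zero, zero_mul]
  rw [Finset.sum_congr rfl hper]
  have h2 : ∀ b ∈ Finset.piAntidiag (Finset.univ : Finset (Fin (n + 1))) d,
      (if b = a then MvPolynomial.C (Dcoef n a t) * ∏ i, MvPolynomial.X i ^ b i else 0)
      = if b = a then MvPolynomial.C (Dcoef n a t) * ∏ i, MvPolynomial.X i ^ a i
        else 0 := by
    intro b _
    split
    case isTrue h => rw [h]
    case isFalse => rfl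
  rw [Finset.sum_congr rfl h2, Finset.sum_ite_eq', if_pos hmem]


end WaringStmt1
end

section
/- With the notation of the context, if at least one a_i is odd (i.e. E_a ≠ {0, …, n}), then ∑_{Z_a ⊆ A ⊆ E_a} 2^{n − |A|} · ∏_{i∉A} (m_i + 1) = (1/2) · ∏_{i∉Z_a} (a_i + 1). (The left-hand side counts the total number of pairs (k, s) with k ∈ K_A and s ∈ S̄_A over all admissible A, i.e. the number of linear forms in the Waring-type decomposition of the monomial X_0^{a_0}⋯X_n^{a_n} obtained from the main identity.) -/
open Finset

/-- **Counting the linear forms in the Waring-type decomposition.**  Let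
`a = (a_0,…,a_n)` be nonnegative integers with at least one `a_i` odd (i.e.
`E_a ≠ {0,…,n}`), `Z_a = {i : a_i = 0}`, `E_a = {i : a_i even}` and
`m_i = ⌊(a_i − 1)/2⌋`.  Then
`∑_{Z_a ⊆ A ⊆ E_a} 2^{n−|A|} ∏_{i∉A} (m_i + 1) = (1/2) ∏_{i∉Z_a} (a_i + 1)`. -/
theorem count_waring_forms_odd_case (n : ℕ) (a : Fin (n + 1) → ℕ)
    (hodd : ∃ i, Odd (a i)) :
    ∑ A ∈ Finset.univ.powerset.filter
        (fun A : Finset (Fin (n + 1)) =>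
          (Finset.univ.filter fun i => a i = 0) ⊆ A ∧
            A ⊆ Finset.univ.filter fun i => Even (a i)),
      (2 : ℚ) ^ (n - A.card) * ∏ i ∈ Aᶜ, (((a i - 1) / 2 : ℕ) + 1 : ℚ) =
    (1 / 2) * ∏ i ∈ (Finset.univ.filter fun i => a i = 0)ᶜ, ((a i : ℚ) + 1) := by
  classical
  obtain ⟨j, hj⟩ := hodd
  set Z := Finset.univ.filter (fun i => a i = 0) with hZdef
  set E := Finset.univ.filter (fun i : Fin (n+1) => Even (a i)) with hEdef
  have hZiff : ∀ i, i ∈ Z ↔ a i = 0 := fun i => by simp [hZdef]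
  have hEiff : ∀ i, i ∈ E ↔ Even (a i) := fun i => by simp [hEdef]
  have hZE : Z ⊆ E := fun i hi => by
    rw [hEiff]; rw [hZiff] at hi; simp [hi]
  have hjE : j ∉ E := by rw [hEiff]; exact Nat.not_even_iff_odd.mpr hj
  -- step 1: rewrite each summand
  have step1 : ∀ A : Finset (Fin (n+1)), Z ⊆ A → A ⊆ E →
      (2 : ℚ) ^ (n - A.card) * ∏ i ∈ Aᶜ, (((a i - 1) / 2 : ℕ) + 1 : ℚ)
      = (∏ i ∈ E \ A, (a i : ℚ)) * ((1/2) * ∏ i ∈ Eᶜ, ((a i : ℚ) + 1)) := by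
    intro A hZA hAE
    have hcard : A.card ≤ n := by
      have hne : A ≠ (univ : Finset (Fin (n+1))) := by
        intro h; exact hjE (hAE (h ▸ mem_univ j))
      have := Finset.card_lt_card (lt_of_le_of_ne A.subset_univ hne)
      simp only [Finset.card_univ, Fintype.card_fin] at this
      omega
    have hsplit : Aᶜ = (E \ A) ∪ Eᶜ := by
      ext i
      have h1 := @hAE i
      simp only [Finset.mem_compl, Finset.mem_sdiff, Finset.mem_union]
      tauto
    have hdisj : Disjoint (E \ A) Eᶜ := by
      refine Finset.disjoint_left.mpr fun i hi hi' => ?_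
      rw [Finset.mem_compl] at hi'; exact hi' (Finset.mem_sdiff.mp hi).1
    have hprod2 : ∏ i ∈ Aᶜ, ((2:ℚ) * (((a i - 1) / 2 : ℕ) + 1)) =
        (∏ i ∈ E \ A, (a i : ℚ)) * ∏ i ∈ Eᶜ, ((a i : ℚ) + 1) := by
      rw [hsplit, Finset.prod_union hdisj]
      congr 1
      · refine Finset.prod_congr rfl fun i hi => ?_
        rw [Finset.mem_sdiff] at hi
        have he : Even (a i) := (hEiff i).mp hi.1
        have hz : a i ≠ 0 := fun h => hi.2 (hZA ((hZiff i).mpr h))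
        obtain ⟨k, hk⟩ := he
        have h2 : 2 * ((a i - 1) / 2 + 1) = a i := by omega
        exact_mod_cast h2
      · refine Finset.prod_congr rfl fun i hi => ?_
        rw [Finset.mem_compl] at hi
        have ho : Odd (a i) := Nat.not_even_iff_odd.mp (fun h => hi ((hEiff i).mpr h))
        obtain ⟨k, hk⟩ := ho
        have h2 : 2 * ((a i - 1) / 2 + 1) = a i + 1 := by omega
        exact_mod_cast h2
    have hcompl : Aᶜ.card = n + 1 - A.card := by
      simp [Finset.card_compl]
    calc (2 : ℚ) ^ (n - A.card) * ∏ i ∈ Aᶜ, (((a i - 1) / 2 : ℕ) + 1 : ℚ)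
        = (1/2) * ((2:ℚ) ^ Aᶜ.card * ∏ i ∈ Aᶜ, (((a i - 1) / 2 : ℕ) + 1 : ℚ)) := by
          rw [hcompl, show n + 1 - A.card = (n - A.card) + 1 by omega, pow_succ]
          ring
      _ = (1/2) * ∏ i ∈ Aᶜ, ((2:ℚ) * (((a i - 1) / 2 : ℕ) + 1)) := by
          rw [Finset.prod_mul_distrib, Finset.prod_const]
      _ = _ := by rw [hprod2]; ring
  have hsum : ∑ A ∈ Finset.univ.powerset.filter
      (fun A : Finset (Fin (n+1)) => Z ⊆ A ∧ A ⊆ E),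
      (2 : ℚ) ^ (n - A.card) * ∏ i ∈ Aᶜ, (((a i - 1) / 2 : ℕ) + 1 : ℚ)
      = ∑ A ∈ Finset.univ.powerset.filter
      (fun A : Finset (Fin (n+1)) => Z ⊆ A ∧ A ⊆ E),
      (∏ i ∈ E \ A, (a i : ℚ)) * ((1/2) * ∏ i ∈ Eᶜ, ((a i : ℚ) + 1)) := by
    refine Finset.sum_congr rfl fun A hA => ?_
    rw [Finset.mem_filter] at hA
    exact step1 A hA.2.1 hA.2.2
  rw [hsum, ← Finset.sum_mul]
  -- step 2: the remaining sum
  have main : ∑ A ∈ Finset.univ.powerset.filter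
      (fun A : Finset (Fin (n+1)) => Z ⊆ A ∧ A ⊆ E),
      (∏ i ∈ E \ A, (a i : ℚ)) = ∏ i ∈ E \ Z, ((a i : ℚ) + 1) := by
    have hpa := Finset.prod_add (fun _ : Fin (n+1) => (1:ℚ)) (fun i => (a i : ℚ)) (E \ Z)
    simp only [Finset.prod_const_one, one_mul] at hpa
    have hP : ∏ i ∈ E \ Z, ((a i : ℚ) + 1)
        = ∑ B ∈ (E \ Z).powerset, ∏ i ∈ (E \ Z) \ B, (a i : ℚ) := by
      rw [← hpa]; exact Finset.prod_congr rfl fun i _ => by ring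
    rw [hP]
    refine Finset.sum_nbij' (i := fun A => A \ Z) (j := fun B => Z ∪ B) ?_ ?_ ?_ ?_ ?_
    · intro A hA
      rw [Finset.mem_filter] at hA
      rw [Finset.mem_powerset]
      exact Finset.sdiff_subset_sdiff hA.2.2 le_rfl
    · intro B hB
      rw [Finset.mem_powerset] at hB
      rw [Finset.mem_filter]
      refine ⟨Finset.mem_powerset.mpr (Finset.subset_univ _),
        Finset.subset_union_left, Finset.union_subset hZE ?_⟩
      exact hB.trans (Finset.sdiff_subset)
    · intro A hA
      rw [Finset.mem_filter] at hA
      show Z ∪ (A \ Z) = A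
      rw [Finset.union_sdiff_of_subset hA.2.1]
    · intro B hB
      rw [Finset.mem_powerset] at hB
      have : Disjoint Z B := Finset.disjoint_left.mpr fun i hi hib =>
        (Finset.mem_sdiff.mp (hB hib)).2 hi
      show (Z ∪ B) \ Z = B
      rw [Finset.union_sdiff_cancel_left this]
    · intro A hA
      rw [Finset.mem_filter] at hA
      congr 1
      ext i
      have h1 := @hA.2.1 i
      simp only [Finset.mem_sdiff]
      tauto
  rw [main]
  have hsplit : Zᶜ = Eᶜ ∪ (E \ Z) := by
    ext i
    have := @hZE i
    simp only [Finset.mem_compl, Finset.mem_union, Finset.mem_sdiff]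
    tauto
  have hdisj : Disjoint Eᶜ (E \ Z) := Finset.disjoint_left.mpr fun i hi hi' =>
    (Finset.mem_compl.mp hi) (Finset.mem_sdiff.mp hi').1
  rw [hsplit, Finset.prod_union hdisj]
  ring
end

section
/- With the notation of the context, ∑_{Z_a ⊆ A ⊆ E_a, A ≠ {0,…,n}} ( ∏_{i∉A} (m_i + 1) − ∏_{i∉A} m_i ) · 2^{n − |A|} = (1/2) · ( ∏_{i∉Z_a} (a_i + 1) − ∏_{i∉Z_a} (a_i − 1) ). (The left-hand side is the total number of pairs (k, s) with k ∈ K̄_A and s ∈ S̄_A over all admissible A, i.e. the number of linear forms in the reduced Waring-type decomposition of the monomial X_0^{a_0}⋯X_n^{a_n}.) -/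
open Finset

lemma waring_aux_sum {n : ℕ} (S T : Finset (Fin n)) (hST : S ⊆ T) (f : Fin n → ℚ) :
    ∑ B ∈ S.powerset, ∏ i ∈ T \ B, f i = (∏ i ∈ T \ S, f i) * ∏ i ∈ S, (1 + f i) := by
  rw [Finset.prod_add, Finset.mul_sum]
  apply Finset.sum_congr rfl
  intro B hB
  rw [Finset.mem_powerset] at hB
  have hset : T \ B = (T \ S) ∪ (S \ B) := by
    ext x
    have h1 : x ∈ S → x ∈ T := fun h => hST h
    have h2 : x ∈ B → x ∈ S := fun h => hB h
    simp only [Finset.mem_sdiff, Finset.mem_union]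
    tauto
  have hdisj : Disjoint (T \ S) (S \ B) := by
    rw [Finset.disjoint_left]
    intro x hx hx'
    exact (Finset.mem_sdiff.mp hx).2 (Finset.mem_sdiff.mp hx').1
  rw [hset, Finset.prod_union hdisj, Finset.prod_const_one, one_mul]

/-- **Counting the linear forms in the reduced Waring-type decomposition.**  Let
`a = (a_0,…,a_n)` be nonnegative integers, not all zero, with `Z_a = {i : a_i = 0}`,
`E_a = {i : a_i even}` and `m_i = ⌊(a_i − 1)/2⌋`.  Then
`∑_{Z_a ⊆ A ⊆ E_a, A ≠ {0,…,n}} (∏_{i∉A}(m_i + 1) − ∏_{i∉A} m_i) · 2^{n−|A|}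
  = (1/2)(∏_{i∉Z_a}(a_i + 1) − ∏_{i∉Z_a}(a_i − 1))`. -/
theorem count_reduced_waring_forms (n : ℕ) (a : Fin (n + 1) → ℕ)
    (hnz : ∃ i, a i ≠ 0) :
    ∑ A ∈ Finset.univ.powerset.filter
        (fun A : Finset (Fin (n + 1)) =>
          (Finset.univ.filter fun i => a i = 0) ⊆ A ∧
            (A ⊆ Finset.univ.filter fun i => Even (a i)) ∧ A ≠ Finset.univ),
      ((∏ i ∈ Aᶜ, (((a i - 1) / 2 : ℕ) + 1 : ℚ)) - ∏ i ∈ Aᶜ, (((a i - 1) / 2 : ℕ) : ℚ))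
        * (2 : ℚ) ^ (n - A.card) =
    (1 / 2) * ((∏ i ∈ (Finset.univ.filter fun i => a i = 0)ᶜ, ((a i : ℚ) + 1)) -
      ∏ i ∈ (Finset.univ.filter fun i => a i = 0)ᶜ, ((a i : ℚ) - 1)) := by
  classical
  set Z : Finset (Fin (n + 1)) := Finset.univ.filter (fun i => a i = 0) with hZ
  set E : Finset (Fin (n + 1)) := Finset.univ.filter (fun i => Even (a i)) with hE
  have hZE : Z ⊆ E := by
    intro i hi
    simp only [hZ, hE, Finset.mem_filter, Finset.mem_univ, true_and] at *
    simp [hi]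
  set f1 : Fin (n + 1) → ℚ := fun i => 2 * ((((a i - 1) / 2 : ℕ) : ℚ) + 1) with hf1
  set f0 : Fin (n + 1) → ℚ := fun i => 2 * (((a i - 1) / 2 : ℕ) : ℚ) with hf0
  -- Step 1: rewrite each summand
  have step1 : ∀ A ∈ Finset.univ.powerset.filter
      (fun A : Finset (Fin (n + 1)) => Z ⊆ A ∧ A ⊆ E ∧ A ≠ Finset.univ),
      ((∏ i ∈ Aᶜ, (((a i - 1) / 2 : ℕ) + 1 : ℚ)) - ∏ i ∈ Aᶜ, (((a i - 1) / 2 : ℕ) : ℚ))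
        * (2 : ℚ) ^ (n - A.card) =
      (1 / 2) * ((∏ i ∈ Aᶜ, f1 i) - ∏ i ∈ Aᶜ, f0 i) := by
    intro A hA
    simp only [Finset.mem_filter, Finset.mem_powerset] at hA
    obtain ⟨-, -, -, hAne⟩ := hA
    have hcard : A.card ≤ n := by
      by_contra h
      push_neg at h
      have h1 : A.card = n + 1 := le_antisymm (by simpa using Finset.card_le_card A.subset_univ) h
      exact hAne (Finset.eq_univ_of_card A (by simpa using h1))
    have hcc : Aᶜ.card = n + 1 - A.card := by
      have := Finset.card_compl A
      simpa using this
    have hpow : (2 : ℚ) ^ (n - A.card) * 2 = 2 ^ Aᶜ.card := by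
      rw [hcc, ← pow_succ]
      congr 1
      omega
    have hp1 : ∏ i ∈ Aᶜ, f1 i = 2 ^ Aᶜ.card * ∏ i ∈ Aᶜ, ((((a i - 1) / 2 : ℕ) : ℚ) + 1) := by
      rw [hf1, Finset.prod_mul_distrib, Finset.prod_const]
    have hp0 : ∏ i ∈ Aᶜ, f0 i = 2 ^ Aᶜ.card * ∏ i ∈ Aᶜ, (((a i - 1) / 2 : ℕ) : ℚ) := by
      rw [hf0, Finset.prod_mul_distrib, Finset.prod_const]
    rw [hp1, hp0, ← hpow]
    ring
  rw [Finset.sum_congr rfl step1, ← Finset.mul_sum]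
  congr 1
  -- Step 2: drop the condition A ≠ univ
  have step2 : ∑ A ∈ Finset.univ.powerset.filter
      (fun A : Finset (Fin (n + 1)) => Z ⊆ A ∧ A ⊆ E ∧ A ≠ Finset.univ),
      ((∏ i ∈ Aᶜ, f1 i) - ∏ i ∈ Aᶜ, f0 i) =
      ∑ A ∈ Finset.univ.powerset.filter
      (fun A : Finset (Fin (n + 1)) => Z ⊆ A ∧ A ⊆ E),
      ((∏ i ∈ Aᶜ, f1 i) - ∏ i ∈ Aᶜ, f0 i) := by
    apply Finset.sum_subset
    · intro A hA
      simp only [Finset.mem_filter, Finset.mem_powerset] at *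
      tauto
    · intro A hA hA'
      simp only [Finset.mem_filter, Finset.mem_powerset] at hA hA'
      have : A = Finset.univ := by tauto
      simp [this]
  rw [step2]
  -- Step 3: reindex by B = A \ Z
  have step3 : ∀ g : Fin (n + 1) → ℚ,
      ∑ A ∈ Finset.univ.powerset.filter
        (fun A : Finset (Fin (n + 1)) => Z ⊆ A ∧ A ⊆ E),
        ∏ i ∈ Aᶜ, g i = ∑ B ∈ (E \ Z).powerset, ∏ i ∈ Zᶜ \ B, g i := by
    intro g
    apply Finset.sum_nbij' (i := fun A => A \ Z) (j := fun B => B ∪ Z)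
    · intro A hA
      simp only [Finset.mem_filter, Finset.mem_powerset] at hA ⊢
      exact Finset.sdiff_subset_sdiff hA.2.2 le_rfl
    · intro B hB
      simp only [Finset.mem_filter, Finset.mem_powerset] at hB ⊢
      refine ⟨Finset.subset_univ _, Finset.subset_union_right, ?_⟩
      rw [Finset.union_subset_iff]
      exact ⟨hB.trans (Finset.sdiff_subset), hZE⟩
    · intro A hA
      simp only [Finset.mem_filter, Finset.mem_powerset] at hA
      rw [Finset.sdiff_union_self_eq_union, Finset.union_eq_left.mpr hA.2.1]
    · intro B hB
      simp only [Finset.mem_powerset] at hB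
      rw [Finset.union_sdiff_right]
      exact Finset.sdiff_eq_self_of_disjoint (Finset.disjoint_left.mpr
        (fun x hx => (Finset.mem_sdiff.mp (hB hx)).2))
    · intro A hA
      simp only [Finset.mem_filter, Finset.mem_powerset] at hA
      congr 1
      ext x
      have hZA : x ∈ Z → x ∈ A := fun h => hA.2.1 h
      simp only [Finset.mem_compl, Finset.mem_sdiff]
      tauto
  rw [Finset.sum_sub_distrib, step3 f1, step3 f0]
  have hSsub : E \ Z ⊆ Zᶜ := by
    intro x hx
    rw [Finset.mem_compl]
    exact (Finset.mem_sdiff.mp hx).2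
  rw [waring_aux_sum _ _ hSsub f1, waring_aux_sum _ _ hSsub f0]
  -- identify the sdiff
  have hsd : Zᶜ \ (E \ Z) = Eᶜ := by
    ext x
    have hZE' : x ∈ Z → x ∈ E := fun h => hZE h
    simp only [Finset.mem_sdiff, Finset.mem_compl]
    tauto
  rw [hsd]
  -- pointwise identities
  have hodd : ∀ i ∈ Eᶜ, 2 * (((a i - 1) / 2 : ℕ) : ℚ) + 1 = (a i : ℚ) := by
    intro i hi
    rw [Finset.mem_compl, hE, Finset.mem_filter] at hi
    have hiodd : ¬ Even (a i) := fun h => hi ⟨Finset.mem_univ i, h⟩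
    obtain ⟨k, hk⟩ := Nat.odd_iff.mpr (Nat.not_even_iff.mp hiodd)
    have hnat : 2 * ((a i - 1) / 2) + 1 = a i := by omega
    exact_mod_cast congrArg (fun k : ℕ => (k : ℚ)) hnat
  have hevn : ∀ i ∈ E \ Z, 2 * (((a i - 1) / 2 : ℕ) : ℚ) + 2 = (a i : ℚ) := by
    intro i hi
    rw [Finset.mem_sdiff, hE, hZ, Finset.mem_filter, Finset.mem_filter] at hi
    have hne : a i ≠ 0 := fun h => hi.2 ⟨Finset.mem_univ i, h⟩
    obtain ⟨k, hk⟩ := hi.1.2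
    have hnat : 2 * ((a i - 1) / 2) + 2 = a i := by omega
    exact_mod_cast congrArg (fun k : ℕ => (k : ℚ)) hnat
  have hodd1 : ∀ i ∈ Eᶜ, f1 i = (a i : ℚ) + 1 := by
    intro i hi
    have := hodd i hi
    simp only [hf1]
    linarith
  have hodd0 : ∀ i ∈ Eᶜ, f0 i = (a i : ℚ) - 1 := by
    intro i hi
    have := hodd i hi
    simp only [hf0]
    linarith
  have heven1 : ∀ i ∈ E \ Z, 1 + f1 i = (a i : ℚ) + 1 := by
    intro i hi
    have := hevn i hi
    simp only [hf1]
    linarith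
  have heven0 : ∀ i ∈ E \ Z, 1 + f0 i = (a i : ℚ) - 1 := by
    intro i hi
    have := hevn i hi
    simp only [hf0]
    linarith
  rw [Finset.prod_congr rfl hodd1, Finset.prod_congr rfl hodd0,
    Finset.prod_congr rfl heven1, Finset.prod_congr rfl heven0]
  -- combine products
  have hZc : Zᶜ = Eᶜ ∪ (E \ Z) := by
    ext x
    have hZE' : x ∈ Z → x ∈ E := fun h => hZE h
    simp only [Finset.mem_compl, Finset.mem_union, Finset.mem_sdiff]
    tauto
  have hdisj : Disjoint (Eᶜ) (E \ Z) := by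
    rw [Finset.disjoint_left]
    intro x hx hx'
    exact (Finset.mem_compl.mp hx) (Finset.mem_sdiff.mp hx').1
  rw [hZc, Finset.prod_union hdisj, Finset.prod_union hdisj]
end

section
/- For every monomial M = X_0^{a_0} X_1^{a_1} ⋯ X_n^{a_n} in ℝ[X_0, …, X_n] with each a_i > 0 and d = ∑_{i=0}^n a_i, the real Waring rank of M satisfies rank_ℝ(M) ≤ (1/2) · ( ∏_{i=0}^n (a_i + 1) − ∏_{i=0}^n (a_i − 1) ); that is, there exist an integer r with r ≤ (1/2)(∏_{i=0}^n(a_i+1) − ∏_{i=0}^n(a_i−1)), scalars λ_1, …, λ_r ∈ ℝ, and linear forms L_1, …, L_r ∈ ℝ[X_0, …, X_n] of degree 1 such that M = ∑_{i=1}^r λ_i · L_i^d. -/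
open Finset

namespace WaringAux

noncomputable section

/-- one-dimensional interpolation nodes -/
def node (a : ℕ) (j : Fin (a + 1)) : ℝ :=
  (if 2 * (j : ℕ) < a then (-1 : ℝ) else if 2 * (j : ℕ) = a then 0 else 1)
    * (2 : ℝ)⁻¹ ^ min (j : ℕ) (a - (j : ℕ))

lemma q_pos : (0 : ℝ) < (2 : ℝ)⁻¹ := by norm_num

lemma qpow_pos (m : ℕ) : (0 : ℝ) < (2 : ℝ)⁻¹ ^ m := pow_pos q_pos m

lemma qpow_inj {m m' : ℕ} (h : (2 : ℝ)⁻¹ ^ m = (2 : ℝ)⁻¹ ^ m') : m = m' := by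
  rcases lt_trichotomy m m' with hlt | he | hlt
  · have := pow_lt_pow_right_of_lt_one₀ (by norm_num : (0:ℝ) < 2⁻¹) (by norm_num) hlt
    linarith
  · exact he
  · have := pow_lt_pow_right_of_lt_one₀ (by norm_num : (0:ℝ) < 2⁻¹) (by norm_num) hlt
    linarith

lemma node_eq_zero_iff {a : ℕ} {j : Fin (a+1)} : node a j = 0 ↔ 2 * (j : ℕ) = a := by
  unfold node
  rcases lt_trichotomy (2 * (j : ℕ)) a with h | h | h
  · rw [if_pos h]
    simp only [neg_mul, one_mul, neg_eq_zero]
    constructor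
    · intro hz; exact absurd hz (ne_of_gt (qpow_pos _))
    · omega
  · rw [if_neg (by omega), if_pos h]; simp [h]
  · rw [if_neg (by omega), if_neg (by omega)]
    simp only [one_mul]
    constructor
    · intro hz; exact absurd hz (ne_of_gt (qpow_pos _))
    · omega

lemma node_injective (a : ℕ) : Function.Injective (node a) := by
  intro j j' h
  have hj : (j : ℕ) ≤ a := by omega
  have hj' : (j' : ℕ) ≤ a := by omega
  unfold node at h
  rcases lt_trichotomy (2 * (j : ℕ)) a with h1 | h1 | h1 <;>
    rcases lt_trichotomy (2 * (j' : ℕ)) a with h2 | h2 | h2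
  · rw [if_pos h1, if_pos h2] at h
    simp only [neg_mul, one_mul, neg_inj] at h
    have := qpow_inj h
    have : (j : ℕ) = (j' : ℕ) := by omega
    exact Fin.ext this
  · rw [if_pos h1, if_neg (by omega), if_pos h2] at h
    simp only [neg_mul, one_mul, zero_mul] at h
    exact absurd (neg_eq_zero.mp h) (ne_of_gt (qpow_pos _))
  · rw [if_pos h1, if_neg (by omega), if_neg (by omega)] at h
    simp only [neg_mul, one_mul] at h
    have := qpow_pos (min (j : ℕ) (a - (j:ℕ)))
    have := qpow_pos (min (j' : ℕ) (a - (j':ℕ)))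
    linarith
  · rw [if_neg (by omega), if_pos h1, if_pos h2] at h
    simp only [neg_mul, one_mul, zero_mul] at h
    exact absurd (neg_eq_zero.mp h.symm) (ne_of_gt (qpow_pos _))
  · exact Fin.ext (by omega)
  · rw [if_neg (by omega), if_pos h1, if_neg (by omega), if_neg (by omega)] at h
    simp only [zero_mul, one_mul] at h
    exact absurd h.symm (ne_of_gt (qpow_pos _))
  · rw [if_neg (by omega), if_neg (by omega), if_pos h2] at h
    simp only [neg_mul, one_mul] at h
    have := qpow_pos (min (j : ℕ) (a - (j:ℕ)))
    have := qpow_pos (min (j' : ℕ) (a - (j':ℕ)))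
    linarith
  · rw [if_neg (by omega), if_neg (by omega), if_neg (by omega), if_pos h2] at h
    simp only [zero_mul, one_mul] at h
    exact absurd h (ne_of_gt (qpow_pos _))
  · rw [if_neg (by omega), if_neg (by omega), if_neg (by omega), if_neg (by omega)] at h
    simp only [one_mul] at h
    have := qpow_inj h
    have : (j : ℕ) = (j' : ℕ) := by omega
    exact Fin.ext this

lemma node_rev {a : ℕ} (j : Fin (a+1)) : node a (Fin.rev j) = - node a j := by
  have hj : (j : ℕ) ≤ a := by omega
  have hrev : ((Fin.rev j : Fin (a+1)) : ℕ) = a - (j : ℕ) := by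
    rw [Fin.val_rev]; omega
  unfold node
  rw [hrev]
  have hmin : min (a - (j:ℕ)) (a - (a - (j:ℕ))) = min (j : ℕ) (a - (j:ℕ)) := by omega
  rw [hmin]
  rcases lt_trichotomy (2 * (j : ℕ)) a with h1 | h1 | h1
  · rw [if_neg (by omega), if_neg (by omega), if_pos h1]; ring
  · rw [if_neg (by omega), if_pos (by omega), if_neg (by omega), if_pos h1]; ring
  · rw [if_pos (by omega), if_neg (by omega), if_neg (by omega)]; ring

lemma node_step {a : ℕ} {j : Fin (a+1)} (h0 : (j:ℕ) ≠ 0) (hba : (j:ℕ) ≠ a) :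
    ∃ j' : Fin (a+1), node a j = 2⁻¹ * node a j' ∧
      min ((j':Fin (a+1)) : ℕ) (a - ((j':Fin (a+1)) : ℕ)) ≤ min (j:ℕ) (a - (j:ℕ)) ∧
      (node a j ≠ 0 → min ((j':Fin (a+1)) : ℕ) (a - ((j':Fin (a+1)) : ℕ)) < min (j:ℕ) (a - (j:ℕ))) := by
  have hj : (j : ℕ) ≤ a := by omega
  rcases lt_trichotomy (2 * (j : ℕ)) a with h1 | h1 | h1
  · refine ⟨⟨(j:ℕ) - 1, by omega⟩, ?_, by simp; omega, fun _ => by simp only [Fin.val_mk]; omega⟩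
    unfold node
    simp only
    rw [if_pos h1, if_pos (by omega)]
    have hm1 : min (j:ℕ) (a - (j:ℕ)) = (j:ℕ) := by omega
    have hm2 : min ((j:ℕ) - 1) (a - ((j:ℕ) - 1)) = (j:ℕ) - 1 := by omega
    rw [hm1, hm2]
    conv_lhs => rw [show (j : ℕ) = ((j:ℕ) - 1) + 1 from by omega, pow_succ]
    ring
  · refine ⟨j, ?_, le_rfl, fun hne => absurd (node_eq_zero_iff.mpr h1) hne⟩
    rw [node_eq_zero_iff.mpr h1]; ring
  · refine ⟨⟨(j:ℕ) + 1, by omega⟩, ?_, by simp; omega, fun _ => by simp; omega⟩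
    unfold node
    simp only
    rw [if_neg (by omega), if_neg (by omega), if_neg (by omega), if_neg (by omega)]
    have hm1 : min (j:ℕ) (a - (j:ℕ)) = a - (j:ℕ) := by omega
    have hm2 : min ((j:ℕ) + 1) (a - ((j:ℕ) + 1)) = a - (j:ℕ) - 1 := by omega
    rw [hm1, hm2]
    conv_lhs => rw [show a - (j : ℕ) = (a - (j:ℕ) - 1) + 1 from by omega, pow_succ]
    ring

lemma exists_weights (a : ℕ) : ∃ w : Fin (a+1) → ℝ,
    ∀ m : ℕ, m ≤ a → ∑ j, w j * node a j ^ m = if m = a then 1 else 0 := by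
  classical
  set A : Matrix (Fin (a+1)) (Fin (a+1)) ℝ := Matrix.transpose (Matrix.vandermonde (node a)) with hA
  have hdet : IsUnit A.det := by
    rw [hA, Matrix.det_transpose]
    exact (Matrix.det_vandermonde_ne_zero_iff.mpr (node_injective a)).isUnit
  obtain ⟨w, hw⟩ : ∃ w, A.mulVec w = Pi.single (Fin.last a) 1 :=
    ⟨A⁻¹.mulVec (Pi.single (Fin.last a) 1), by
      rw [Matrix.mulVec_mulVec, Matrix.mul_nonsing_inv _ hdet, Matrix.one_mulVec]⟩
  refine ⟨w, fun m hm => ?_⟩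
  have h2 := congrFun hw ⟨m, by omega⟩
  rw [Matrix.mulVec, dotProduct, Pi.single_apply] at h2
  have h3 : ((⟨m, by omega⟩ : Fin (a+1)) = Fin.last a) ↔ m = a := by
    rw [Fin.ext_iff]; simp
  have h4 : ∑ j, w j * node a j ^ m = ∑ j, A ⟨m, by omega⟩ j * w j := by
    apply Finset.sum_congr rfl
    intro j _
    rw [hA]
    simp [Matrix.vandermonde, mul_comm]
  rw [h4, h2]
  by_cases hme : m = a
  · rw [if_pos (h3.mpr hme), if_pos hme]
  · rw [if_neg (fun hh => hme (h3.mp hh)), if_neg hme]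

section Multi

open MvPolynomial

variable {n : ℕ} (a : Fin (n+1) → ℕ)

/-- grid point to coefficient vector -/
def nd (k : ∀ i : Fin (n+1), Fin (a i + 1)) : Fin (n+1) → ℝ := fun i => node (a i) (k i)

/-- linear form with coefficient vector c -/
def LF (c : Fin (n+1) → ℝ) : MvPolynomial (Fin (n+1)) ℝ := ∑ i, c i • X i

lemma LF_homog (c : Fin (n+1) → ℝ) : (LF c).IsHomogeneous 1 := by
  apply IsHomogeneous.sum
  intro i _
  rw [smul_eq_C_mul]
  have := (isHomogeneous_C (Fin (n+1)) (c i)).mul (isHomogeneous_X ℝ i)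
  simpa using this

lemma LF_smul (t : ℝ) (c : Fin (n+1) → ℝ) : LF (fun i => t * c i) = t • LF c := by
  unfold LF
  rw [Finset.smul_sum]
  exact Finset.sum_congr rfl fun i _ => by rw [smul_smul]

lemma LF_neg (c : Fin (n+1) → ℝ) : LF (fun i => - c i) = - LF c := by
  have := LF_smul (-1) c
  simp only [neg_one_mul, neg_one_smul] at this
  exact this

lemma prod_smul'' {ι : Type} (s : Finset ι) (b : ι → ℝ) (f : ι → MvPolynomial (Fin (n+1)) ℝ) :
    ∏ i ∈ s, b i • f i = (∏ i ∈ s, b i) • ∏ i ∈ s, f i := by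
  classical
  induction s using Finset.cons_induction with
  | empty => simp
  | cons j s hj ih =>
      rw [Finset.prod_cons, Finset.prod_cons, Finset.prod_cons, ih, smul_mul_smul_comm]

lemma natcast_mul_eq_smul (m : ℕ) (Q : MvPolynomial (Fin (n+1)) ℝ) :
    (m : MvPolynomial (Fin (n+1)) ℝ) * Q = (m : ℝ) • Q := by
  rw [Nat.cast_smul_eq_nsmul, nsmul_eq_mul]

lemma LF_pow (c : Fin (n+1) → ℝ) (d : ℕ) :
    (LF c) ^ d = ∑ β ∈ Finset.piAntidiag Finset.univ d,
      ((Nat.multinomial Finset.univ β : ℝ) * ∏ i, c i ^ β i) • ∏ i, (X i : MvPolynomial (Fin (n+1)) ℝ) ^ β i := by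
  rw [LF, Finset.sum_pow_eq_sum_piAntidiag]
  apply Finset.sum_congr rfl
  intro β _
  have h1 : ∏ i, (c i • (X i : MvPolynomial (Fin (n+1)) ℝ)) ^ β i
      = (∏ i, c i ^ β i) • ∏ i, (X i : MvPolynomial (Fin (n+1)) ℝ) ^ β i := by
    simp_rw [smul_pow]
    rw [prod_smul'']
  rw [h1, natcast_mul_eq_smul, smul_smul]

lemma main_identity (w : ∀ i, Fin (a i + 1) → ℝ)
    (hw : ∀ i, ∀ m : ℕ, m ≤ a i → ∑ j, w i j * node (a i) j ^ m = if m = a i then 1 else 0)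
    (d : ℕ) (hd : d = ∑ i, a i) :
    ∑ k : (∀ i, Fin (a i + 1)), (∏ i, w i (k i)) • (LF (nd a k)) ^ d
      = (Nat.multinomial Finset.univ a : ℝ) • ∏ i, (X i : MvPolynomial (Fin (n+1)) ℝ) ^ a i := by
  classical
  simp_rw [LF_pow, Finset.smul_sum, smul_smul]
  rw [Finset.sum_comm]
  have key : ∀ β ∈ Finset.piAntidiag Finset.univ d,
      (∑ k : (∀ i, Fin (a i + 1)), (∏ i, w i (k i)) * ((Nat.multinomial Finset.univ β : ℝ) * ∏ i, nd a k i ^ β i))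
      = if β = a then (Nat.multinomial Finset.univ a : ℝ) else 0 := by
    intro β hβ
    rw [Finset.mem_piAntidiag] at hβ
    have hsum : ∑ k : (∀ i, Fin (a i + 1)), (∏ i, w i (k i)) * (∏ i, nd a k i ^ β i)
        = ∏ i, ∑ j, w i j * node (a i) j ^ β i := by
      have h5 : ∀ k : (∀ i, Fin (a i + 1)), (∏ i, w i (k i)) * (∏ i, nd a k i ^ β i)
          = ∏ i, (w i (k i) * node (a i) (k i) ^ β i) := by
        intro k
        rw [← Finset.prod_mul_distrib]
        rfl
      rw [Fintype.sum_congr _ _ h5, Finset.prod_univ_sum]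
      rw [← Fintype.piFinset_univ]
    have hre : ∀ k : (∀ i, Fin (a i + 1)), (∏ i, w i (k i)) * ((Nat.multinomial Finset.univ β : ℝ) * ∏ i, nd a k i ^ β i)
        = (Nat.multinomial Finset.univ β : ℝ) * ((∏ i, w i (k i)) * (∏ i, nd a k i ^ β i)) := by
      intro k; ring
    rw [Fintype.sum_congr _ _ hre, ← Finset.mul_sum, hsum]
    by_cases hba : β = a
    · rw [if_pos hba, hba]
      have h6 : ∀ i ∈ Finset.univ, (∑ j, w i j * node (a i) j ^ a i) = 1 := by
        intro i _
        rw [hw i (a i) le_rfl, if_pos rfl]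
      rw [Finset.prod_congr rfl h6, Finset.prod_const_one, mul_one]
    · rw [if_neg hba]
      have hex : ∃ i₀, β i₀ < a i₀ := by
        by_contra hno
        push_neg at hno
        apply hba
        funext i
        by_contra hne
        have hlt : a i < β i := lt_of_le_of_ne (hno i) (Ne.symm hne)
        have : ∑ i, a i < ∑ i, β i :=
          Finset.sum_lt_sum (fun i _ => hno i) ⟨i, Finset.mem_univ i, hlt⟩
        rw [hβ.1, hd] at this
        exact lt_irrefl _ this
      obtain ⟨i₀, hi₀⟩ := hex
      have h7 : (∑ j, w i₀ j * node (a i₀) j ^ β i₀) = 0 := by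
        rw [hw i₀ (β i₀) (le_of_lt hi₀), if_neg (Nat.ne_of_lt hi₀)]
      rw [Finset.prod_eq_zero (Finset.mem_univ i₀) h7, mul_zero]
  have step : ∀ β ∈ Finset.piAntidiag Finset.univ d,
      (∑ k : (∀ i, Fin (a i + 1)), ((∏ i, w i (k i)) * ((Nat.multinomial Finset.univ β : ℝ) * ∏ i, nd a k i ^ β i))
        • ∏ i, (X i : MvPolynomial (Fin (n+1)) ℝ) ^ β i)
      = (if β = a then (Nat.multinomial Finset.univ a : ℝ) else 0) • ∏ i, (X i : MvPolynomial (Fin (n+1)) ℝ) ^ β i := by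
    intro β hβ
    rw [← Finset.sum_smul, key β hβ]
  rw [Finset.sum_congr rfl step]
  simp_rw [ite_smul, zero_smul]
  rw [Finset.sum_ite_eq' (Finset.piAntidiag Finset.univ d) a
    (fun β => (Nat.multinomial Finset.univ a : ℝ) • ∏ i, (X i : MvPolynomial (Fin (n+1)) ℝ) ^ β i)]
  rw [if_pos]
  rw [Finset.mem_piAntidiag]
  exact ⟨hd.symm, fun i _ => Finset.mem_univ i⟩

attribute [local instance] Classical.propDecidable

/-- boundary grid points -/
def KbS : Finset (∀ i : Fin (n+1), Fin (a i + 1)) :=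
  Finset.univ.filter (fun k => ∃ i, ((k i : ℕ) = 0 ∨ (k i : ℕ) = a i))

/-- indices where the node is nonzero -/
def suppS (k : ∀ i : Fin (n+1), Fin (a i + 1)) : Finset (Fin (n+1)) :=
  Finset.univ.filter (fun i => 2 * ((k i : ℕ)) ≠ a i)

/-- sign normalization predicate -/
def posK (k : ∀ i : Fin (n+1), Fin (a i + 1)) : Prop :=
  ∃ h : (suppS a k).Nonempty, a ((suppS a k).min' h) < 2 * ((k ((suppS a k).min' h) : ℕ))

/-- the positively-normalized boundary points -/
def KbPos : Finset (∀ i : Fin (n+1), Fin (a i + 1)) :=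
  (KbS a).filter (posK a)

def revK (k : ∀ i : Fin (n+1), Fin (a i + 1)) : ∀ i : Fin (n+1), Fin (a i + 1) :=
  fun i => Fin.rev (k i)

lemma val_revK (k : ∀ i : Fin (n+1), Fin (a i + 1)) (i : Fin (n+1)) :
    ((revK a k i : Fin (a i + 1)) : ℕ) = a i - ((k i : ℕ)) := by
  unfold revK
  rw [Fin.val_rev]
  omega

lemma nd_revK (k : ∀ i : Fin (n+1), Fin (a i + 1)) :
    nd a (revK a k) = fun i => - nd a k i := by
  funext i
  exact node_rev (k i)

lemma suppS_revK (k : ∀ i : Fin (n+1), Fin (a i + 1)) :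
    suppS a (revK a k) = suppS a k := by
  unfold suppS
  apply Finset.filter_congr
  intro i _
  have h1 := val_revK a k i
  have h2 : ((k i : ℕ)) ≤ a i := by omega
  constructor <;> intro h <;> omega

lemma revK_mem_KbS {k : ∀ i : Fin (n+1), Fin (a i + 1)} (hk : k ∈ KbS a) :
    revK a k ∈ KbS a := by
  unfold KbS at hk ⊢
  rw [Finset.mem_filter] at hk ⊢
  obtain ⟨-, i, hi⟩ := hk
  refine ⟨Finset.mem_univ _, i, ?_⟩
  have h1 := val_revK a k i
  have h2 : ((k i : ℕ)) ≤ a i := by omega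
  omega

lemma suppS_nonempty_of_mem_KbS (ha : ∀ i, 0 < a i) {k : ∀ i : Fin (n+1), Fin (a i + 1)}
    (hk : k ∈ KbS a) : (suppS a k).Nonempty := by
  unfold KbS at hk
  rw [Finset.mem_filter] at hk
  obtain ⟨-, i, hi⟩ := hk
  refine ⟨i, ?_⟩
  unfold suppS
  rw [Finset.mem_filter]
  refine ⟨Finset.mem_univ _, ?_⟩
  have := ha i
  omega

lemma posK_revK (ha : ∀ i, 0 < a i) {k : ∀ i : Fin (n+1), Fin (a i + 1)}
    (hk : k ∈ KbS a) : posK a (revK a k) ↔ ¬ posK a k := by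
  have hne : (suppS a k).Nonempty := suppS_nonempty_of_mem_KbS a ha hk
  have hne' : (suppS a (revK a k)).Nonempty := by rw [suppS_revK]; exact hne
  have hmin' : ∀ h', (suppS a (revK a k)).min' h' = (suppS a k).min' hne := by
    intro h'
    congr 1
    exact suppS_revK a k
  have hi₀mem : (suppS a k).min' hne ∈ suppS a k := (suppS a k).min'_mem hne
  have hi₀ne : 2 * ((k ((suppS a k).min' hne) : ℕ)) ≠ a ((suppS a k).min' hne) := by
    unfold suppS at hi₀mem
    rw [Finset.mem_filter] at hi₀mem
    exact hi₀mem.2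
  have hle : ((k ((suppS a k).min' hne) : ℕ)) ≤ a ((suppS a k).min' hne) := by omega
  have hval := val_revK a k ((suppS a k).min' hne)
  unfold posK
  constructor
  · rintro ⟨h, hpos⟩ ⟨h', hpos'⟩
    rw [hmin' h, hval] at hpos
    have e' : (suppS a k).min' h' = (suppS a k).min' hne := rfl
    rw [e'] at hpos'
    omega
  · intro hnp
    refine ⟨hne', ?_⟩
    rw [hmin' hne', hval]
    have hnot : ¬ (a ((suppS a k).min' hne) < 2 * ((k ((suppS a k).min' hne) : ℕ))) :=
      fun hc => hnp ⟨hne, hc⟩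
    omega

variable (d : ℕ)

/-- span of powers of positively normalized boundary linear forms -/
def SP : Submodule ℝ (MvPolynomial (Fin (n+1)) ℝ) :=
  Submodule.span ℝ (((KbPos a).image (fun k => LF (nd a k) ^ d) : Finset (MvPolynomial (Fin (n+1)) ℝ)) : Set (MvPolynomial (Fin (n+1)) ℝ))

lemma mem_SP_of_KbS (ha : ∀ i, 0 < a i) {k : ∀ i : Fin (n+1), Fin (a i + 1)}
    (hk : k ∈ KbS a) : LF (nd a k) ^ d ∈ SP a d := by
  by_cases hp : posK a k
  · have hkp : k ∈ KbPos a := by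
      rw [KbPos, Finset.mem_filter]; exact ⟨hk, hp⟩
    exact Submodule.subset_span (Finset.mem_coe.mpr (Finset.mem_image_of_mem _ hkp))
  · have hk' : revK a k ∈ KbPos a := by
      rw [KbPos, Finset.mem_filter]
      exact ⟨revK_mem_KbS a hk, (posK_revK a ha hk).mpr hp⟩
    have hLF : LF (nd a (revK a k)) = - LF (nd a k) := by
      rw [nd_revK]
      exact LF_neg _
    have hP : LF (nd a k) = - LF (nd a (revK a k)) := by rw [hLF, neg_neg]
    rw [hP, ← neg_one_smul ℝ (LF (nd a (revK a k))), smul_pow]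
    apply Submodule.smul_mem
    exact Submodule.subset_span (Finset.mem_coe.mpr (Finset.mem_image_of_mem _ hk'))

/-- measure for the induction -/
def mea (k : ∀ i : Fin (n+1), Fin (a i + 1)) : ℕ :=
  ∑ i, min ((k i : ℕ)) (a i - ((k i : ℕ)))

lemma mem_SP_all (ha : ∀ i, 0 < a i) (hd0 : 0 < d)
    (k : ∀ i : Fin (n+1), Fin (a i + 1)) : LF (nd a k) ^ d ∈ SP a d := by
  suffices h : ∀ N k, mea a k = N → LF (nd a k) ^ d ∈ SP a d by
    exact h (mea a k) k rfl
  intro N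
  induction N using Nat.strong_induction_on with
  | _ N IH =>
    intro k hkN
    by_cases hb : k ∈ KbS a
    · exact mem_SP_of_KbS a d ha hb
    · have hint : ∀ i, ((k i : ℕ)) ≠ 0 ∧ ((k i : ℕ)) ≠ a i := by
        unfold KbS at hb
        rw [Finset.mem_filter] at hb
        push_neg at hb
        intro i
        have := hb (Finset.mem_univ k) i
        omega
      by_cases hz : ∀ i, node (a i) (k i) = 0
      · have hLF0 : LF (nd a k) = 0 := by
          unfold LF nd
          apply Finset.sum_eq_zero
          intro i _
          rw [hz i, zero_smul]
        rw [hLF0, zero_pow (by omega : d ≠ 0)]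
        exact Submodule.zero_mem _
      · push_neg at hz
        obtain ⟨i₁, hi₁⟩ := hz
        have hstep : ∀ i, ∃ j' : Fin (a i + 1), node (a i) (k i) = 2⁻¹ * node (a i) j' ∧
            min ((j' : Fin (a i + 1)) : ℕ) (a i - ((j' : Fin (a i + 1)) : ℕ)) ≤ min ((k i : ℕ)) (a i - ((k i : ℕ))) ∧
            (node (a i) (k i) ≠ 0 → min ((j' : Fin (a i + 1)) : ℕ) (a i - ((j' : Fin (a i + 1)) : ℕ)) < min ((k i : ℕ)) (a i - ((k i : ℕ)))) :=
          fun i => node_step (hint i).1 (hint i).2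
        choose k' h1 h2 h3 using hstep
        have hLF : LF (nd a k) = (2 : ℝ)⁻¹ • LF (nd a k') := by
          rw [← LF_smul]
          congr 1
          funext i
          exact h1 i
        have hmlt : mea a k' < N := by
          rw [← hkN]
          exact Finset.sum_lt_sum (fun i _ => h2 i) ⟨i₁, Finset.mem_univ i₁, h3 i₁ hi₁⟩
        have := IH (mea a k') hmlt k' rfl
        rw [hLF, smul_pow]
        exact Submodule.smul_mem _ _ this

lemma card_boundary_1d (b : ℕ) (hb : 0 < b) :
    (Finset.univ.filter (fun j : Fin (b+1) => ¬(((j:ℕ)) = 0 ∨ ((j:ℕ)) = b))).card = b - 1 := by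
  classical
  have hsplit := Finset.card_filter_add_card_filter_not
    (s := (Finset.univ : Finset (Fin (b+1)))) (p := fun j : Fin (b+1) => (((j:ℕ)) = 0 ∨ ((j:ℕ)) = b))
  have hset : Finset.univ.filter (fun j : Fin (b+1) => (((j:ℕ)) = 0 ∨ ((j:ℕ)) = b))
      = {(0 : Fin (b+1)), Fin.last b} := by
    ext j
    simp only [Finset.mem_filter, Finset.mem_univ, true_and, Finset.mem_insert,
      Finset.mem_singleton]
    constructor
    · rintro (h | h)
      · left; exact Fin.ext (by simpa using h)
      · right; exact Fin.ext (by simpa using h)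
    · rintro (h | h)
      · left; rw [h]; rfl
      · right; rw [h]; simp
  have hcard2 : ({(0 : Fin (b+1)), Fin.last b} : Finset (Fin (b+1))).card = 2 := by
    rw [Finset.card_insert_of_notMem, Finset.card_singleton]
    simp only [Finset.mem_singleton]
    intro h
    have := congrArg Fin.val h
    simp at this
    omega
  rw [hset, hcard2] at hsplit
  simp only [Finset.card_univ, Fintype.card_fin] at hsplit
  omega

lemma card_KbS (ha : ∀ i, 0 < a i) :
    (KbS a).card = (∏ i, (a i + 1)) - ∏ i, (a i - 1) := by
  classical
  have hsplit := Finset.card_filter_add_card_filter_not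
    (s := (Finset.univ : Finset (∀ i : Fin (n+1), Fin (a i + 1))))
    (p := fun k => ∃ i, ((k i : ℕ) = 0 ∨ (k i : ℕ) = a i))
  have hKb : (KbS a).card = (Finset.univ.filter
      (fun k : (∀ i : Fin (n+1), Fin (a i + 1)) => ∃ i, ((k i : ℕ) = 0 ∨ (k i : ℕ) = a i))).card := by
    unfold KbS
    congr 1
  have hintset : (Finset.univ.filter
      (fun k : (∀ i : Fin (n+1), Fin (a i + 1)) => ¬ ∃ i, ((k i : ℕ) = 0 ∨ (k i : ℕ) = a i)))
      = Fintype.piFinset (fun i => Finset.univ.filter (fun j : Fin (a i + 1) => ¬(((j:ℕ)) = 0 ∨ ((j:ℕ)) = a i))) := by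
    ext k
    simp only [Finset.mem_filter, Finset.mem_univ, true_and, Fintype.mem_piFinset]
    push_neg
    constructor
    · intro h i
      exact ⟨(h i).1, (h i).2⟩
    · intro h i
      exact ⟨(h i).1, (h i).2⟩
  have hintcard : (Finset.univ.filter
      (fun k : (∀ i : Fin (n+1), Fin (a i + 1)) => ¬ ∃ i, ((k i : ℕ) = 0 ∨ (k i : ℕ) = a i))).card
      = ∏ i, (a i - 1) := by
    rw [hintset, Fintype.card_piFinset]
    exact Finset.prod_congr rfl fun i _ => card_boundary_1d (a i) (ha i)
  have htot : (Finset.univ : Finset (∀ i : Fin (n+1), Fin (a i + 1))).card = ∏ i, (a i + 1) := by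
    rw [Finset.card_univ, Fintype.card_pi]
    exact Finset.prod_congr rfl fun i _ => by rw [Fintype.card_fin]
  clear hintset
  rw [hKb]
  rw [← htot, ← hintcard]
  exact Nat.eq_sub_of_add_eq hsplit

lemma revK_involutive (k : ∀ i : Fin (n+1), Fin (a i + 1)) : revK a (revK a k) = k := by
  funext i
  exact Fin.rev_rev (k i)

lemma two_mul_card_KbPos (ha : ∀ i, 0 < a i) :
    2 * (KbPos a).card = (KbS a).card := by
  classical
  have hsplit : ((KbS a).filter (posK a)).card + ((KbS a).filter (fun k => ¬ posK a k)).card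
      = (KbS a).card := Finset.card_filter_add_card_filter_not _
  have hbij : ((KbS a).filter (posK a)).card = ((KbS a).filter (fun k => ¬ posK a k)).card := by
    apply Finset.card_bij' (fun k _ => revK a k) (fun k _ => revK a k)
    · intro k hk
      rw [Finset.mem_filter] at hk ⊢
      exact ⟨revK_mem_KbS a hk.1, fun hr => (posK_revK a ha hk.1).mp hr hk.2⟩
    · intro k hk
      rw [Finset.mem_filter] at hk ⊢
      exact ⟨revK_mem_KbS a hk.1, (posK_revK a ha hk.1).mpr hk.2⟩
    · intro k _
      exact revK_involutive a k
    · intro k _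
      exact revK_involutive a k
  unfold KbPos
  omega

end Multi

end

end WaringAux

open MvPolynomial

/-- **Real Waring rank bound for monomials.**  For every monomial
`M = X_0^{a_0} ⋯ X_n^{a_n}` in `ℝ[X_0,…,X_n]` with all `a_i > 0` and
`d = ∑ a_i`, there is a Waring decomposition `M = ∑_{j=1}^r λ_j L_j^d` with
`λ_j ∈ ℝ`, `L_j` linear forms (homogeneous of degree 1), and
`r ≤ (1/2)(∏ (a_i + 1) − ∏ (a_i − 1))`; in particular
`rank_ℝ(M) ≤ (1/2)(∏ (a_i + 1) − ∏ (a_i − 1))`. -/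
theorem real_waring_rank_bound_monomial (n : ℕ) (a : Fin (n + 1) → ℕ)
    (ha : ∀ i, 0 < a i) (d : ℕ) (hd : d = ∑ i, a i) :
    ∃ (r : ℕ) (lam : Fin r → ℝ) (L : Fin r → MvPolynomial (Fin (n + 1)) ℝ),
      (r : ℚ) ≤ (1 / 2) * ((∏ i, ((a i : ℚ) + 1)) - ∏ i, ((a i : ℚ) - 1)) ∧
      (∀ j, (L j).IsHomogeneous 1) ∧
      (∏ i, (X i : MvPolynomial (Fin (n + 1)) ℝ) ^ a i) = ∑ j, lam j • L j ^ d := by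
  classical
  obtain ⟨w, hw⟩ : ∃ w : ∀ i, Fin (a i + 1) → ℝ, ∀ i, ∀ m : ℕ, m ≤ a i →
      ∑ j, w i j * WaringAux.node (a i) j ^ m = if m = a i then 1 else 0 := by
    choose w hw using fun i => WaringAux.exists_weights (a i)
    exact ⟨w, hw⟩
  have hd0 : 0 < d := by
    rw [hd]
    exact Finset.sum_pos (fun i _ => ha i) Finset.univ_nonempty
  have hident := WaringAux.main_identity a w hw d hd
  have hMspan : (∏ i, (X i : MvPolynomial (Fin (n + 1)) ℝ) ^ a i) ∈ WaringAux.SP a d := by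
    have hsum : ∑ k : (∀ i, Fin (a i + 1)), (∏ i, w i (k i)) • (WaringAux.LF (WaringAux.nd a k)) ^ d
        ∈ WaringAux.SP a d :=
      Submodule.sum_mem _ (fun k _ => Submodule.smul_mem _ _ (WaringAux.mem_SP_all a d ha hd0 k))
    rw [hident] at hsum
    have hc : (Nat.multinomial Finset.univ a : ℝ) ≠ 0 := by
      exact_mod_cast (Nat.multinomial_pos _ _).ne'
    have h5 := Submodule.smul_mem _ ((Nat.multinomial Finset.univ a : ℝ))⁻¹ hsum
    rwa [smul_smul, inv_mul_cancel₀ hc, one_smul] at h5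
  set S : Finset (MvPolynomial (Fin (n + 1)) ℝ) :=
    (WaringAux.KbPos a).image (fun k => WaringAux.LF (WaringAux.nd a k) ^ d) with hS
  rw [WaringAux.SP, Submodule.mem_span_finset] at hMspan
  obtain ⟨f, -, hf⟩ := hMspan
  have hmem : ∀ v : {x // x ∈ S}, ∃ k, k ∈ WaringAux.KbPos a ∧
      WaringAux.LF (WaringAux.nd a k) ^ d = (v : MvPolynomial (Fin (n + 1)) ℝ) := by
    intro v
    have := v.2
    simp only [hS, Finset.mem_image] at this
    obtain ⟨k, hk1, hk2⟩ := this
    exact ⟨k, hk1, hk2⟩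
  choose kf hkf1 hkf2 using hmem
  refine ⟨S.card, fun j => f ((S.equivFin.symm j : {x // x ∈ S}) : MvPolynomial (Fin (n + 1)) ℝ),
    fun j => WaringAux.LF (WaringAux.nd a (kf (S.equivFin.symm j))), ?_, ?_, ?_⟩
  · -- cardinality bound
    have h1 : S.card ≤ (WaringAux.KbPos a).card := Finset.card_image_le
    have h2 := WaringAux.two_mul_card_KbPos a ha
    have h3 := WaringAux.card_KbS a ha
    have hPQ : (∏ i, (a i - 1)) ≤ ∏ i, (a i + 1) :=
      Finset.prod_le_prod' (fun i _ => by omega)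
    have hnat : 2 * S.card ≤ (∏ i, (a i + 1)) - ∏ i, (a i - 1) := by omega
    have hcast1 : ((∏ i, (a i + 1) : ℕ) : ℚ) = ∏ i, ((a i : ℚ) + 1) := by
      push_cast
      rfl
    have hcast2 : ((∏ i, (a i - 1) : ℕ) : ℚ) = ∏ i, ((a i : ℚ) - 1) := by
      rw [Nat.cast_prod]
      refine Finset.prod_congr rfl fun i _ => ?_
      rw [Nat.cast_sub (ha i), Nat.cast_one]
    have hq : ((2 * S.card : ℕ) : ℚ) ≤ (((∏ i, (a i + 1)) - ∏ i, (a i - 1) : ℕ) : ℚ) :=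
      Nat.cast_le.mpr hnat
    rw [Nat.cast_sub hPQ, hcast1, hcast2, Nat.cast_mul] at hq
    push_cast at hq ⊢
    linarith
  · intro j
    exact WaringAux.LF_homog _
  · calc (∏ i, (X i : MvPolynomial (Fin (n + 1)) ℝ) ^ a i)
        = ∑ v ∈ S, f v • v := hf.symm
      _ = ∑ v : {x // x ∈ S}, f (v : MvPolynomial (Fin (n + 1)) ℝ) • (v : MvPolynomial (Fin (n + 1)) ℝ) :=
          (Finset.sum_coe_sort S (fun v => f v • v)).symm
      _ = ∑ j : Fin S.card, f ((S.equivFin.symm j : {x // x ∈ S}) : MvPolynomial (Fin (n + 1)) ℝ)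
            • ((S.equivFin.symm j : {x // x ∈ S}) : MvPolynomial (Fin (n + 1)) ℝ) :=
          (Equiv.sum_comp S.equivFin.symm
            (fun v : {x // x ∈ S} => f (v : MvPolynomial (Fin (n + 1)) ℝ) • (v : MvPolynomial (Fin (n + 1)) ℝ))).symm
      _ = ∑ j : Fin S.card, f ((S.equivFin.symm j : {x // x ∈ S}) : MvPolynomial (Fin (n + 1)) ℝ)
            • (WaringAux.LF (WaringAux.nd a (kf (S.equivFin.symm j)))) ^ d := by
          refine Finset.sum_congr rfl fun j _ => ?_
          rw [hkf2 (S.equivFin.symm j)]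
end

section
/- For every monomial M = X_0^{a_0} X_1^{a_1} ⋯ X_n^{a_n} in ℚ[X_0, …, X_n] with each a_i > 0 and d = ∑_{i=0}^n a_i, the rational Waring rank of M satisfies rank_ℚ(M) ≤ (1/2) · ( ∏_{i=0}^n (a_i + 1) − ∏_{i=0}^n (a_i − 1) ); that is, there exist an integer r with r ≤ (1/2)(∏_{i=0}^n(a_i+1) − ∏_{i=0}^n(a_i−1)), scalars λ_1, …, λ_r ∈ ℚ, and linear forms L_1, …, L_r ∈ ℚ[X_0, …, X_n] of degree 1 such that M = ∑_{i=1}^r λ_i · L_i^d. -/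
open Finset

/-- Dual basis weights for a Vandermonde system. -/
lemma waring_exists_dual_weights {m : ℕ} (v : Fin m → ℚ) (hv : Function.Injective v)
    (t : Fin m → ℚ) :
    ∃ w : Fin m → ℚ, ∀ r : Fin m, ∑ k, w k * v k ^ (r : ℕ) = t r := by
  classical
  set A : Matrix (Fin m) (Fin m) ℚ := Matrix.transpose (Matrix.vandermonde v) with hA
  have hdet : A.det ≠ 0 := by
    rw [hA, Matrix.det_transpose]
    exact Matrix.det_vandermonde_ne_zero_iff.mpr hv
  refine ⟨A⁻¹.mulVec t, fun r => ?_⟩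
  have h1 : A.mulVec (A⁻¹.mulVec t) = t := by
    rw [Matrix.mulVec_mulVec, Matrix.mul_nonsing_inv A (isUnit_iff_ne_zero.mpr hdet),
      Matrix.one_mulVec]
  have h2 := congrFun h1 r
  rw [Matrix.mulVec, dotProduct] at h2
  simpa [hA, Matrix.vandermonde, mul_comm] using h2

/-- Sign of the `j`-th node for exponent `a` : `0`, `1` or `-1`. -/
def waringNodeSgn (a j : ℕ) : ℚ :=
  if Even a ∧ j = 0 then 0 else (-1) ^ j

/-- Dyadic exponent of the `j`-th node. -/
def waringNodeExp (a j : ℕ) : ℕ :=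
  if Even a then (j - 1) / 2 else j / 2

/-- The `j`-th node for exponent `a`. -/
def waringNodeVal (a j : ℕ) : ℚ := waringNodeSgn a j * 2 ^ waringNodeExp a j

lemma waringNodeSgn_cases (a j : ℕ) :
    waringNodeSgn a j = 0 ∨ waringNodeSgn a j = 1 ∨ waringNodeSgn a j = -1 := by
  unfold waringNodeSgn
  split
  · exact Or.inl rfl
  · rcases Nat.even_or_odd j with h | h
    · exact Or.inr (Or.inl (h.neg_one_pow))
    · exact Or.inr (Or.inr (h.neg_one_pow))

lemma waringNodeSgn_eq_zero_iff (a j : ℕ) :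
    waringNodeSgn a j = 0 ↔ (Even a ∧ j = 0) := by
  unfold waringNodeSgn
  split
  · simpa
  · rename_i h
    simp only [iff_false, h]
    rcases Nat.even_or_odd j with hj | hj
    · rw [hj.neg_one_pow]; norm_num
    · rw [hj.neg_one_pow]; norm_num

lemma waringNodeVal_eq_zero_iff (a j : ℕ) :
    waringNodeVal a j = 0 ↔ (Even a ∧ j = 0) := by
  unfold waringNodeVal
  rw [mul_eq_zero]
  constructor
  · rintro (h | h)
    · exact (waringNodeSgn_eq_zero_iff a j).mp h
    · exact absurd h (by positivity)
  · intro h; exact Or.inl ((waringNodeSgn_eq_zero_iff a j).mpr h)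

-- exponent bound
lemma waringNodeExp_le (a j : ℕ) (hj : j ≤ a) : waringNodeExp a j ≤ (a - 1) / 2 := by
  unfold waringNodeExp
  split
  · omega
  · rename_i h
    have h2 := Nat.odd_iff.mp (Nat.not_even_iff_odd.mp h)
    omega

lemma waring_two_pow_inj {k k' : ℕ} (h : (2:ℚ) ^ k = 2 ^ k') : k = k' := by
  by_contra hne
  rcases Nat.lt_or_ge k k' with hlt | hge
  · have h2 : (2:ℚ) ^ k < 2 ^ k' := by
      exact pow_lt_pow_right₀ one_lt_two hlt
    linarith
  · have hlt : k' < k := by omega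
    have h2 : (2:ℚ) ^ k' < 2 ^ k := by
      exact pow_lt_pow_right₀ one_lt_two hlt
    linarith

lemma waring_neg_one_pow_inj {j j' : ℕ} (h : ((-1:ℚ)) ^ j = (-1) ^ j') : j % 2 = j' % 2 := by
  rcases Nat.even_or_odd j with he | he <;> rcases Nat.even_or_odd j' with he' | he'
  · have h1 := Nat.even_iff.mp he; have h2 := Nat.even_iff.mp he'; omega
  · rw [he.neg_one_pow, he'.neg_one_pow] at h; norm_num at h
  · rw [he.neg_one_pow, he'.neg_one_pow] at h; norm_num at h
  · have h1 := Nat.odd_iff.mp he; have h2 := Nat.odd_iff.mp he'; omega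

lemma waringNode_sgn_exp_inj (a : ℕ) {j j' : ℕ} (hj : j ≤ a) (hj' : j' ≤ a)
    (hs : waringNodeSgn a j = waringNodeSgn a j')
    (he : waringNodeExp a j = waringNodeExp a j') : j = j' := by
  by_cases hz : waringNodeSgn a j = 0
  · have hz' : waringNodeSgn a j' = 0 := by rw [← hs]; exact hz
    have h1 := (waringNodeSgn_eq_zero_iff a j).mp hz
    have h2 := (waringNodeSgn_eq_zero_iff a j').mp hz'
    omega
  · have hz' : ¬ waringNodeSgn a j' = 0 := by rw [← hs]; exact hz
    have h1 := (waringNodeSgn_eq_zero_iff a j).not.mp hz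
    have h2 := (waringNodeSgn_eq_zero_iff a j').not.mp hz'
    have hs2 : ((-1:ℚ)) ^ j = (-1) ^ j' := by
      unfold waringNodeSgn at hs
      rwa [if_neg h1, if_neg h2] at hs
    have hpar := waring_neg_one_pow_inj hs2
    unfold waringNodeExp at he
    by_cases hEv : Even a
    · rw [if_pos hEv, if_pos hEv] at he
      have hj0 : j ≠ 0 := by intro h0; exact h1 ⟨hEv, h0⟩
      have hj0' : j' ≠ 0 := by intro h0; exact h2 ⟨hEv, h0⟩
      omega
    · rw [if_neg hEv, if_neg hEv] at he
      omega

lemma waringNodeVal_inj (a : ℕ) {j j' : ℕ} (hj : j ≤ a) (hj' : j' ≤ a)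
    (h : waringNodeVal a j = waringNodeVal a j') : j = j' := by
  have hp : (0:ℚ) < 2 ^ waringNodeExp a j := by positivity
  have hp' : (0:ℚ) < 2 ^ waringNodeExp a j' := by positivity
  unfold waringNodeVal at h
  rcases waringNodeSgn_cases a j with hs | hs | hs <;>
    rcases waringNodeSgn_cases a j' with hs' | hs' | hs' <;>
      rw [hs, hs'] at h
  · -- both signs zero
    have h1 := (waringNodeSgn_eq_zero_iff a j).mp hs
    have h2 := (waringNodeSgn_eq_zero_iff a j').mp hs'
    omega
  · exfalso; nlinarith
  · exfalso; nlinarith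
  · exfalso; nlinarith
  · exact waringNode_sgn_exp_inj a hj hj' (by rw [hs, hs'])
      (waring_two_pow_inj (by nlinarith))
  · exfalso; nlinarith
  · exfalso; nlinarith
  · exfalso; nlinarith
  · exact waringNode_sgn_exp_inj a hj hj' (by rw [hs, hs'])
      (waring_two_pow_inj (by nlinarith))

/-- Index of the node `±2^k` (sign given by `s`). -/
def waringNodeIdx (a : ℕ) (s : Bool) (k : ℕ) : ℕ :=
  if Even a then 2 * k + (if s then 2 else 1) else 2 * k + (if s then 0 else 1)

lemma waringNodeIdx_le (a : ℕ) (s : Bool) (k : ℕ) (ha : 1 ≤ a) (hk : k ≤ (a - 1) / 2) :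
    waringNodeIdx a s k ≤ a := by
  unfold waringNodeIdx
  by_cases hEv : Even a
  · rw [if_pos hEv]
    have h2 := Nat.even_iff.mp hEv
    cases s <;> simp <;> omega
  · rw [if_neg hEv]
    have h2 := Nat.odd_iff.mp (Nat.not_even_iff_odd.mp hEv)
    cases s <;> simp <;> omega

lemma waringNodeSgn_idx (a : ℕ) (s : Bool) (k : ℕ) :
    waringNodeSgn a (waringNodeIdx a s k) = if s then 1 else -1 := by
  unfold waringNodeSgn waringNodeIdx
  by_cases hEv : Even a
  · rw [if_pos hEv]
    cases s
    · simp only [if_false, Bool.false_eq_true]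
      rw [if_neg (by omega)]
      exact Odd.neg_one_pow ⟨k, by ring⟩
    · simp only [if_true]
      rw [if_neg (by omega)]
      exact Even.neg_one_pow ⟨k + 1, by ring⟩
  · rw [if_neg hEv]
    cases s
    · simp only [if_false, Bool.false_eq_true]
      rw [if_neg (by tauto)]
      exact Odd.neg_one_pow ⟨k, by ring⟩
    · simp only [if_true]
      rw [if_neg (by tauto)]
      exact Even.neg_one_pow ⟨k, by ring⟩

lemma waringNodeExp_idx (a : ℕ) (s : Bool) (k : ℕ) :
    waringNodeExp a (waringNodeIdx a s k) = k := by
  unfold waringNodeExp waringNodeIdx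
  by_cases hEv : Even a
  · rw [if_pos hEv, if_pos hEv]; cases s <;> simp <;> omega
  · rw [if_neg hEv, if_neg hEv]; cases s <;> simp <;> omega

lemma waringNodeVal_idx (a : ℕ) (s : Bool) (k : ℕ) :
    waringNodeVal a (waringNodeIdx a s k) = (if s then 1 else -1) * 2 ^ k := by
  unfold waringNodeVal
  rw [waringNodeSgn_idx, waringNodeExp_idx]

/-- The moment weights for a single variable. -/
lemma waring_exists_moment_weights (a : ℕ) :
    ∃ w : Fin (a + 1) → ℚ, ∀ m : ℕ, m ≤ a →
      ∑ j, w j * (waringNodeVal a (j : ℕ)) ^ m = if m = a then 1 else 0 := by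
  have hinj : Function.Injective (fun j : Fin (a + 1) => waringNodeVal a (j : ℕ)) := by
    intro j j' h
    exact Fin.ext (waringNodeVal_inj a (by omega) (by omega) h)
  obtain ⟨w, hw⟩ := waring_exists_dual_weights _ hinj
    (fun r => if (r : ℕ) = a then 1 else 0)
  refine ⟨w, fun m hm => ?_⟩
  have := hw ⟨m, by omega⟩
  simpa using this

lemma waring_card_shiftable (a : ℕ) (ha : 1 ≤ a) :
    (univ.filter fun j : Fin (a + 1) =>
      waringNodeSgn a (j : ℕ) = 0 ∨ 1 ≤ waringNodeExp a (j : ℕ)).card ≤ a - 1 := by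
  classical
  have hsplit := Finset.card_filter_add_card_filter_not
    (s := (univ : Finset (Fin (a + 1))))
    (p := fun j : Fin (a + 1) => waringNodeSgn a (j : ℕ) = 0 ∨ 1 ≤ waringNodeExp a (j : ℕ))
  have hcompl : 2 ≤ (univ.filter fun j : Fin (a + 1) =>
      ¬(waringNodeSgn a (j : ℕ) = 0 ∨ 1 ≤ waringNodeExp a (j : ℕ))).card := by
    have hmem1 : (⟨waringNodeIdx a true 0, by
        have := waringNodeIdx_le a true 0 ha (by omega); omega⟩ : Fin (a + 1)) ∈
        univ.filter fun j : Fin (a + 1) =>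
          ¬(waringNodeSgn a (j : ℕ) = 0 ∨ 1 ≤ waringNodeExp a (j : ℕ)) := by
      simp only [Finset.mem_filter, Finset.mem_univ, true_and]
      push_neg
      constructor
      · rw [waringNodeSgn_idx]; norm_num
      · rw [waringNodeExp_idx]; omega
    have hmem2 : (⟨waringNodeIdx a false 0, by
        have := waringNodeIdx_le a false 0 ha (by omega); omega⟩ : Fin (a + 1)) ∈
        univ.filter fun j : Fin (a + 1) =>
          ¬(waringNodeSgn a (j : ℕ) = 0 ∨ 1 ≤ waringNodeExp a (j : ℕ)) := by
      simp only [Finset.mem_filter, Finset.mem_univ, true_and]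
      push_neg
      constructor
      · rw [waringNodeSgn_idx]; norm_num
      · rw [waringNodeExp_idx]; omega
    have hne : (⟨waringNodeIdx a true 0, by
        have := waringNodeIdx_le a true 0 ha (by omega); omega⟩ : Fin (a + 1)) ≠
        (⟨waringNodeIdx a false 0, by
        have := waringNodeIdx_le a false 0 ha (by omega); omega⟩ : Fin (a + 1)) := by
      intro hcon
      have h1 : waringNodeSgn a (waringNodeIdx a true 0) =
          waringNodeSgn a (waringNodeIdx a false 0) := by
        congr 1
        exact congrArg (fun x : Fin (a + 1) => (x : ℕ)) hcon
      rw [waringNodeSgn_idx, waringNodeSgn_idx] at h1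
      norm_num at h1
    calc 2 = ({(⟨waringNodeIdx a true 0, by
            have := waringNodeIdx_le a true 0 ha (by omega); omega⟩ : Fin (a + 1)),
          (⟨waringNodeIdx a false 0, by
            have := waringNodeIdx_le a false 0 ha (by omega); omega⟩ : Fin (a + 1))} :
          Finset (Fin (a + 1))).card := by
          rw [Finset.card_insert_of_notMem (by simpa using hne), Finset.card_singleton]
      _ ≤ _ := by
          apply Finset.card_le_card
          intro x hx
          simp only [Finset.mem_insert, Finset.mem_singleton] at hx
          rcases hx with h | h <;> rw [h]
          · exact hmem1
          · exact hmem2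
  have hcard : (univ : Finset (Fin (a + 1))).card = a + 1 := by simp
  omega

lemma waring_card_pivot (a : ℕ) :
    (univ.filter fun j : Fin (a + 1) =>
      waringNodeSgn a (j : ℕ) = 1 ∧ waringNodeExp a (j : ℕ) = 0).card ≤ 1 := by
  apply Finset.card_le_one.mpr
  intro x hx y hy
  simp only [Finset.mem_filter] at hx hy
  apply Fin.ext
  exact waringNode_sgn_exp_inj a (by omega) (by omega)
    (by rw [hx.2.1, hy.2.1]) (by rw [hx.2.2, hy.2.2])

open MvPolynomial in
/-- The linear form attached to a coefficient vector. -/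
noncomputable def waringL {n : ℕ} (c : Fin (n + 1) → ℚ) : MvPolynomial (Fin (n + 1)) ℚ :=
  ∑ i, C (c i) * X i

open MvPolynomial in
lemma waringL_isHomogeneous {n : ℕ} (c : Fin (n + 1) → ℚ) :
    (waringL c).IsHomogeneous 1 := by
  apply IsHomogeneous.sum
  intro i _
  simpa using (isHomogeneous_X ℚ i).C_mul (c i)

open MvPolynomial in
lemma waring_grid_identity {n : ℕ} (a : Fin (n + 1) → ℕ) (w : ∀ i, Fin (a i + 1) → ℚ)
    (hw : ∀ i, ∀ m : ℕ, m ≤ a i →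
      ∑ j, w i j * (waringNodeVal (a i) (j : ℕ)) ^ m = if m = a i then 1 else 0)
    (d : ℕ) (hd : d = ∑ i, a i) :
    ∑ σ : (∀ i, Fin (a i + 1)), (∏ i, w i (σ i)) •
        (waringL (fun i => waringNodeVal (a i) ((σ i : ℕ)))) ^ d
      = (Nat.multinomial univ a : ℚ) • ∏ i, (X i : MvPolynomial (Fin (n + 1)) ℚ) ^ a i := by
  classical
  have hL : ∀ c : Fin (n + 1) → ℚ, (waringL c) ^ d =
      ∑ k ∈ Finset.piAntidiag (univ : Finset (Fin (n + 1))) d,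
        C ((Nat.multinomial univ k : ℚ) * ∏ i, c i ^ k i) * ∏ i, X i ^ k i := by
    intro c
    rw [waringL, Finset.sum_pow_eq_sum_piAntidiag]
    refine Finset.sum_congr rfl fun k hk => ?_
    rw [map_mul, ← map_natCast (C : ℚ →+* MvPolynomial (Fin (n + 1)) ℚ)]
    rw [mul_assoc]
    congr 1
    simp only [mul_pow]
    rw [Finset.prod_mul_distrib]
    congr 1
    rw [map_prod]
    exact Finset.prod_congr rfl fun i _ => (map_pow C (c i) (k i)).symm
  calc
    ∑ σ : (∀ i, Fin (a i + 1)), (∏ i, w i (σ i)) •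
        (waringL (fun i => waringNodeVal (a i) ((σ i : ℕ)))) ^ d
      = ∑ k ∈ Finset.piAntidiag (univ : Finset (Fin (n + 1))) d,
          C ((Nat.multinomial univ k : ℚ) *
            ∏ i, (∑ j, w i j * (waringNodeVal (a i) (j : ℕ)) ^ k i)) * ∏ i, X i ^ k i := by
        simp_rw [hL, Finset.smul_sum]
        rw [Finset.sum_comm]
        refine Finset.sum_congr rfl fun k hk => ?_
        have hswap : ∑ σ : (∀ i, Fin (a i + 1)),
            (∏ i, w i (σ i)) * ∏ i, (waringNodeVal (a i) ((σ i : ℕ))) ^ k i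
            = ∏ i, (∑ j, w i j * (waringNodeVal (a i) (j : ℕ)) ^ k i) := by
          rw [Finset.prod_univ_sum (fun i => (univ : Finset (Fin (a i + 1))))
            (fun i j => w i j * (waringNodeVal (a i) (j : ℕ)) ^ k i)]
          rw [Fintype.piFinset_univ]
          refine Finset.sum_congr rfl fun σ _ => ?_
          rw [Finset.prod_mul_distrib]
        conv_rhs => rw [← hswap]
        simp only [map_mul, map_sum, Finset.mul_sum, Finset.sum_mul, smul_eq_C_mul]
        refine Finset.sum_congr rfl fun σ _ => ?_
        ring
    _ = (Nat.multinomial univ a : ℚ) • ∏ i, (X i : MvPolynomial (Fin (n + 1)) ℚ) ^ a i := by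
        have hamem : a ∈ Finset.piAntidiag (univ : Finset (Fin (n + 1))) d := by
          rw [Finset.mem_piAntidiag]
          exact ⟨hd.symm, fun i _ => Finset.mem_univ i⟩
        rw [Finset.sum_eq_single_of_mem a hamem]
        · have h1 : ∀ i : Fin (n + 1),
              (∑ j, w i j * (waringNodeVal (a i) (j : ℕ)) ^ a i) = 1 := by
            intro i
            rw [hw i (a i) le_rfl, if_pos rfl]
          simp only [h1, Finset.prod_const_one, mul_one, smul_eq_C_mul]
        · intro k hk hne
          -- find a coordinate with k i < a i
          have hex : ∃ i, k i < a i := by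
            by_contra hcon
            push_neg at hcon
            have hsum : ∑ i, k i = ∑ i, a i := by
              rw [Finset.mem_piAntidiag] at hk
              rw [hk.1, hd]
            have : ∀ i ∈ (univ : Finset (Fin (n + 1))), a i = k i := by
              rw [← Finset.sum_eq_sum_iff_of_le (fun i _ => hcon i)]
              omega
            exact hne (funext fun i => ((this i (Finset.mem_univ i)).symm))
          obtain ⟨i, hi⟩ := hex
          have hz : (∑ j, w i j * (waringNodeVal (a i) (j : ℕ)) ^ k i) = 0 := by
            rw [hw i (k i) (le_of_lt hi), if_neg (by omega)]
          rw [Finset.prod_eq_zero (Finset.mem_univ i) hz]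
          simp

namespace WaringAux

variable {n : ℕ}

/-- sign data of a grid point -/
def sg (a : Fin (n + 1) → ℕ) (σ : ∀ i, Fin (a i + 1)) (i : Fin (n + 1)) : ℚ :=
  waringNodeSgn (a i) ((σ i : ℕ))

/-- exponent data of a grid point -/
def ex (a : Fin (n + 1) → ℕ) (σ : ∀ i, Fin (a i + 1)) (i : Fin (n + 1)) : ℕ :=
  waringNodeExp (a i) ((σ i : ℕ))

/-- support of a grid point -/
def suppF (a : Fin (n + 1) → ℕ) (σ : ∀ i, Fin (a i + 1)) : Finset (Fin (n + 1)) :=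
  Finset.univ.filter fun i => sg a σ i ≠ 0

/-- minimal dyadic exponent on the support -/
def mexp (a : Fin (n + 1) → ℕ) (σ : ∀ i, Fin (a i + 1)) : ℕ :=
  if h : (suppF a σ).Nonempty then (suppF a σ).inf' h (ex a σ) else 0

def pivF (a : Fin (n + 1) → ℕ) (σ : ∀ i, Fin (a i + 1)) : Finset (Fin (n + 1)) :=
  (suppF a σ).filter fun i => ex a σ i = mexp a σ

def piv (a : Fin (n + 1) → ℕ) (σ : ∀ i, Fin (a i + 1)) : Fin (n + 1) :=
  if h : (pivF a σ).Nonempty then (pivF a σ).min' h else ⟨0, Nat.succ_pos n⟩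

lemma pivF_nonempty {a : Fin (n + 1) → ℕ} {σ : ∀ i, Fin (a i + 1)}
    (h : (suppF a σ).Nonempty) : (pivF a σ).Nonempty := by
  obtain ⟨i, hi, hinf⟩ := Finset.exists_mem_eq_inf' h (ex a σ)
  refine ⟨i, Finset.mem_filter.mpr ⟨hi, ?_⟩⟩
  rw [mexp, dif_pos h, hinf]

lemma piv_mem {a : Fin (n + 1) → ℕ} {σ : ∀ i, Fin (a i + 1)}
    (h : (suppF a σ).Nonempty) : piv a σ ∈ pivF a σ := by
  rw [piv, dif_pos (pivF_nonempty h)]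
  exact Finset.min'_mem _ _

lemma mexp_le {a : Fin (n + 1) → ℕ} {σ : ∀ i, Fin (a i + 1)} {i : Fin (n + 1)}
    (h : (suppF a σ).Nonempty) (hi : i ∈ suppF a σ) : mexp a σ ≤ ex a σ i := by
  rw [mexp, dif_pos h]
  exact Finset.inf'_le _ hi

/-- normalization map -/
def πmap (a : Fin (n + 1) → ℕ) (ha : ∀ i, 0 < a i) (σ : ∀ i, Fin (a i + 1)) :
    ∀ i, Fin (a i + 1) :=
  fun i => if sg a σ i = 0 then σ i else
    ⟨waringNodeIdx (a i)
        (if sg a σ (piv a σ) * sg a σ i = 1 then true else false)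
        (ex a σ i - mexp a σ), by
      have h1 := waringNodeIdx_le (a i)
        (if sg a σ (piv a σ) * sg a σ i = 1 then true else false)
        (ex a σ i - mexp a σ) (ha i)
        (le_trans (Nat.sub_le _ _) (waringNodeExp_le (a i) ((σ i : ℕ)) (by omega)))
      omega⟩

lemma sg_piv_cases {a : Fin (n + 1) → ℕ} {σ : ∀ i, Fin (a i + 1)}
    (h : (suppF a σ).Nonempty) : sg a σ (piv a σ) = 1 ∨ sg a σ (piv a σ) = -1 := by
  have h1 := piv_mem h
  rw [pivF, Finset.mem_filter, suppF, Finset.mem_filter] at h1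
  rcases waringNodeSgn_cases (a (piv a σ)) ((σ (piv a σ) : ℕ)) with hs | hs | hs
  · exact absurd hs h1.1.2
  · exact Or.inl hs
  · exact Or.inr hs

/-- the collinearity relation -/
lemma val_pi (a : Fin (n + 1) → ℕ) (ha : ∀ i, 0 < a i) (σ : ∀ i, Fin (a i + 1))
    (h : (suppF a σ).Nonempty) (i : Fin (n + 1)) :
    waringNodeVal (a i) ((σ i : ℕ)) =
      (sg a σ (piv a σ) * 2 ^ (mexp a σ)) *
        waringNodeVal (a i) ((πmap a ha σ i : ℕ)) := by
  by_cases hz : sg a σ i = 0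
  · have h1 : waringNodeVal (a i) ((σ i : ℕ)) = 0 := by
      rw [waringNodeVal, show waringNodeSgn (a i) ((σ i : ℕ)) = 0 from hz, zero_mul]
    rw [h1, πmap]
    simp only [if_pos hz]
    rw [h1, mul_zero]
  · have hmem : i ∈ suppF a σ := Finset.mem_filter.mpr ⟨Finset.mem_univ i, hz⟩
    have hme : mexp a σ ≤ ex a σ i := mexp_le h hmem
    have hb : waringNodeVal (a i) ((πmap a ha σ i : ℕ)) =
        (sg a σ (piv a σ) * sg a σ i) * 2 ^ (ex a σ i - mexp a σ) := by
      rw [πmap]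
      simp only [if_neg hz]
      rw [waringNodeVal_idx]
      congr 1
      rcases sg_piv_cases h with hp | hp <;>
        rcases waringNodeSgn_cases (a i) ((σ i : ℕ)) with hs | hs | hs <;>
          first
            | exact absurd hs hz
            | (rw [show sg a σ (piv a σ) = _ from hp, show sg a σ i = _ from hs]
               norm_num)
    have hsq : sg a σ (piv a σ) * sg a σ (piv a σ) = 1 := by
      rcases sg_piv_cases h with hp | hp <;> rw [hp] <;> norm_num
    have hvi : waringNodeVal (a i) ((σ i : ℕ)) = sg a σ i * 2 ^ ex a σ i := rfl
    have hpow : (2:ℚ) ^ mexp a σ * 2 ^ (ex a σ i - mexp a σ) = 2 ^ ex a σ i := by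
      rw [← pow_add]
      congr 1
      omega
    rw [hb, hvi, ← hpow]
    linear_combination (-(sg a σ i) * (2:ℚ) ^ mexp a σ * 2 ^ (ex a σ i - mexp a σ)) * hsq

end WaringAux

namespace WaringAux

variable {n : ℕ}

lemma sg_pi_piv (a : Fin (n + 1) → ℕ) (ha : ∀ i, 0 < a i) (σ : ∀ i, Fin (a i + 1))
    (h : (suppF a σ).Nonempty) :
    sg a (πmap a ha σ) (piv a σ) = 1 ∧ ex a (πmap a ha σ) (piv a σ) = 0 := by
  have h1 := piv_mem h
  rw [pivF, Finset.mem_filter, suppF, Finset.mem_filter] at h1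
  have hz : ¬ sg a σ (piv a σ) = 0 := h1.1.2
  have hsq : sg a σ (piv a σ) * sg a σ (piv a σ) = 1 := by
    rcases sg_piv_cases h with hp | hp <;> rw [hp] <;> norm_num
  constructor
  · show waringNodeSgn _ _ = 1
    rw [πmap]
    simp only [if_neg hz]
    rw [waringNodeSgn_idx, if_pos hsq]
    rfl
  · show waringNodeExp _ _ = 0
    rw [πmap]
    simp only [if_neg hz]
    rw [waringNodeExp_idx]
    have := h1.2
    omega

lemma sg_pi_lt (a : Fin (n + 1) → ℕ) (ha : ∀ i, 0 < a i) (σ : ∀ i, Fin (a i + 1))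
    (h : (suppF a σ).Nonempty) (i : Fin (n + 1)) (hi : i < piv a σ) :
    sg a (πmap a ha σ) i = 0 ∨ 1 ≤ ex a (πmap a ha σ) i := by
  by_cases hz : sg a σ i = 0
  · left
    show waringNodeSgn _ _ = 0
    rw [πmap]
    simp only [if_pos hz]
    exact hz
  · right
    have hmem : i ∈ suppF a σ := Finset.mem_filter.mpr ⟨Finset.mem_univ i, hz⟩
    have hme : mexp a σ ≤ ex a σ i := mexp_le h hmem
    have hne : ex a σ i ≠ mexp a σ := by
      intro hcon
      have hpivmem : i ∈ pivF a σ := Finset.mem_filter.mpr ⟨hmem, hcon⟩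
      have : piv a σ ≤ i := by
        rw [piv, dif_pos (pivF_nonempty h)]
        exact Finset.min'_le _ _ hpivmem
      exact absurd hi (not_lt.mpr this)
    show 1 ≤ waringNodeExp _ _
    rw [πmap]
    simp only [if_neg hz]
    rw [waringNodeExp_idx]
    omega

/-- counting bound for the image of the normalization map -/
lemma image_card_le (a : Fin (n + 1) → ℕ) (ha : ∀ i, 0 < a i) :
    (((Finset.univ.filter fun σ : ∀ i, Fin (a i + 1) => (suppF a σ).Nonempty)).image
        (πmap a ha)).card ≤
      ∑ p : Fin (n + 1), ∏ i,
        (if i.val < p.val then a i - 1 else if i = p then 1 else a i + 1) := by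
  classical
  set Tset : Fin (n + 1) → Finset (∀ i, Fin (a i + 1)) := fun p =>
    Fintype.piFinset (fun i =>
      if i.val < p.val then
        Finset.univ.filter (fun j : Fin (a i + 1) =>
          waringNodeSgn (a i) (j : ℕ) = 0 ∨ 1 ≤ waringNodeExp (a i) (j : ℕ))
      else if i = p then
        Finset.univ.filter (fun j : Fin (a i + 1) =>
          waringNodeSgn (a i) (j : ℕ) = 1 ∧ waringNodeExp (a i) (j : ℕ) = 0)
      else Finset.univ) with hTset
  have hsub : ((Finset.univ.filter fun σ : ∀ i, Fin (a i + 1) =>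
      (suppF a σ).Nonempty)).image (πmap a ha) ⊆ Finset.univ.biUnion Tset := by
    intro τ hτ
    rw [Finset.mem_image] at hτ
    obtain ⟨σ, hσ, hτ2⟩ := hτ
    rw [Finset.mem_filter] at hσ
    have h := hσ.2
    rw [Finset.mem_biUnion]
    refine ⟨piv a σ, Finset.mem_univ _, ?_⟩
    rw [hTset]
    rw [Fintype.mem_piFinset]
    intro i
    by_cases h1 : i.val < (piv a σ).val
    · rw [if_pos h1, Finset.mem_filter]
      refine ⟨Finset.mem_univ _, ?_⟩
      have := sg_pi_lt a ha σ h i (by exact Fin.lt_def.mpr h1)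
      rw [hτ2] at this
      exact this
    · by_cases h2 : i = piv a σ
      · rw [if_neg h1, if_pos h2, Finset.mem_filter]
        refine ⟨Finset.mem_univ _, ?_⟩
        have := sg_pi_piv a ha σ h
        rw [hτ2] at this
        rw [h2]
        exact this
      · rw [if_neg h1, if_neg h2]
        exact Finset.mem_univ _
  calc _ ≤ (Finset.univ.biUnion Tset).card := Finset.card_le_card hsub
    _ ≤ ∑ p, (Tset p).card := Finset.card_biUnion_le
    _ ≤ _ := by
        apply Finset.sum_le_sum
        intro p _
        rw [hTset]
        rw [Fintype.card_piFinset]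
        apply Finset.prod_le_prod'
        intro i _
        by_cases h1 : i.val < p.val
        · rw [if_pos h1, if_pos h1]
          exact waring_card_shiftable (a i) (ha i)
        · by_cases h2 : i = p
          · rw [if_neg h1, if_pos h2, if_neg h1, if_pos h2]
            exact waring_card_pivot (a i)
          · rw [if_neg h1, if_neg h2, if_neg h1, if_neg h2]
            simp

end WaringAux

/-- the telescoping identity -/
lemma waring_telescope {n : ℕ} (x : Fin (n + 1) → ℚ) :
    ∑ p : Fin (n + 1), ∏ i,
        (if i.val < p.val then x i - 1 else if i = p then 1 else x i + 1)
      = (1 / 2) * ((∏ i, (x i + 1)) - ∏ i, (x i - 1)) := by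
  classical
  set g : ℕ → ℚ := fun t => ∏ i, (if i.val < t then x i - 1 else x i + 1) with hg
  have hterm : ∀ p : Fin (n + 1),
      ∏ i, (if i.val < p.val then x i - 1 else if i = p then 1 else x i + 1)
        = (g p.val - g (p.val + 1)) / 2 := by
    intro p
    have hA : ∀ f : Fin (n + 1) → ℚ, ∏ i, f i = f p * ∏ i ∈ Finset.univ.erase p, f i := by
      intro f
      rw [Finset.mul_prod_erase _ _ (Finset.mem_univ p)]
    have hsame : ∀ i ∈ Finset.univ.erase p,
        (if i.val < p.val then x i - 1 else if i = p then 1 else x i + 1)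
          = (if i.val < p.val then x i - 1 else x i + 1) := by
      intro i hi
      have hne : i ≠ p := (Finset.mem_erase.mp hi).1
      by_cases h1 : i.val < p.val
      · rw [if_pos h1, if_pos h1]
      · rw [if_neg h1, if_neg h1, if_neg hne]
    have hsame2 : ∀ i ∈ Finset.univ.erase p,
        (if i.val < p.val + 1 then x i - 1 else x i + 1)
          = (if i.val < p.val then x i - 1 else x i + 1) := by
      intro i hi
      have hne : i ≠ p := (Finset.mem_erase.mp hi).1
      have hne2 : i.val ≠ p.val := fun hcon => hne (Fin.ext hcon)
      by_cases h1 : i.val < p.val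
      · rw [if_pos h1, if_pos (by omega)]
      · rw [if_neg h1, if_neg (by omega)]
    rw [hA, hg]
    simp only
    rw [hA (fun i => if i.val < p.val then x i - 1 else x i + 1)]
    rw [hA (fun i => if i.val < p.val + 1 then x i - 1 else x i + 1)]
    rw [Finset.prod_congr rfl hsame, Finset.prod_congr rfl hsame2]
    have e1 : (if p.val < p.val then x p - 1 else if True then (1:ℚ) else x p + 1) = 1 := by
      simp
    have e2 : (if p.val < p.val then x p - 1 else x p + 1) = x p + 1 := by simp
    have e3 : (if p.val < p.val + 1 then x p - 1 else x p + 1) = x p - 1 := by simp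
    rw [e1, e2, e3]
    ring
  rw [Finset.sum_congr rfl (fun p _ => hterm p)]
  have hconv : ∑ p : Fin (n + 1), (g p.val - g (p.val + 1)) / 2
      = (∑ t ∈ Finset.range (n + 1), (g t - g (t + 1))) / 2 := by
    rw [Finset.sum_div]
    exact Fin.sum_univ_eq_sum_range (fun t => (g t - g (t + 1)) / 2) (n + 1)
  rw [hconv, Finset.sum_range_sub' g (n + 1)]
  have hg0 : g 0 = ∏ i, (x i + 1) := by
    rw [hg]
    exact Finset.prod_congr rfl fun i _ => by rw [if_neg (Nat.not_lt_zero _)]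
  have hgn : g (n + 1) = ∏ i, (x i - 1) := by
    rw [hg]
    exact Finset.prod_congr rfl fun i _ => by rw [if_pos (i.isLt)]
  rw [hg0, hgn]
  ring

open MvPolynomial in
lemma waringL_mul {n : ℕ} (q : ℚ) (c : Fin (n + 1) → ℚ) :
    waringL (fun i => q * c i) = C q * waringL c := by
  rw [waringL, waringL, Finset.mul_sum]
  exact Finset.sum_congr rfl fun i _ => by rw [map_mul, mul_assoc]

open MvPolynomial
open WaringAux

/-- **Rational Waring rank bound for monomials.**  For every monomial
`M = X_0^{a_0} ⋯ X_n^{a_n}` in `ℚ[X_0,…,X_n]` with all `a_i > 0` and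
`d = ∑ a_i`, there is a Waring decomposition `M = ∑_{j=1}^r λ_j L_j^d` with
`λ_j ∈ ℚ`, `L_j` linear forms (homogeneous of degree 1), and
`r ≤ (1/2)(∏ (a_i + 1) − ∏ (a_i − 1))`; in particular
`rank_ℚ(M) ≤ (1/2)(∏ (a_i + 1) − ∏ (a_i − 1))`. -/
theorem rational_waring_rank_bound_monomial (n : ℕ) (a : Fin (n + 1) → ℕ)
    (ha : ∀ i, 0 < a i) (d : ℕ) (hd : d = ∑ i, a i) :
    ∃ (r : ℕ) (lam : Fin r → ℚ) (L : Fin r → MvPolynomial (Fin (n + 1)) ℚ),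
      (r : ℚ) ≤ (1 / 2) * ((∏ i, ((a i : ℚ) + 1)) - ∏ i, ((a i : ℚ) - 1)) ∧
      (∀ j, (L j).IsHomogeneous 1) ∧
      (∏ i, (X i : MvPolynomial (Fin (n + 1)) ℚ) ^ a i) = ∑ j, lam j • L j ^ d := by
  classical
  choose w hw using fun i => waring_exists_moment_weights (a i)
  have GI := waring_grid_identity a w hw d hd
  set κ : ℚ := (Nat.multinomial Finset.univ a : ℚ) with hκ
  have hκpos : 0 < κ := by
    rw [hκ]; exact_mod_cast Nat.multinomial_pos _ _
  have hd1 : 0 < d := by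
    rw [hd]; exact Finset.sum_pos (fun i _ => ha i) Finset.univ_nonempty
  set F : (∀ i, Fin (a i + 1)) → MvPolynomial (Fin (n + 1)) ℚ := fun σ =>
    (∏ i, w i (σ i)) • (waringL (fun i => waringNodeVal (a i) ((σ i : ℕ)))) ^ d with hF
  set S : Finset (∀ i, Fin (a i + 1)) :=
    Finset.univ.filter (fun σ => (suppF a σ).Nonempty) with hS
  have hres : ∑ σ ∈ S, F σ = κ • ∏ i, (X i : MvPolynomial (Fin (n + 1)) ℚ) ^ a i := by
    rw [← GI, hS]
    apply Finset.sum_filter_of_ne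
    intro σ _ hne
    by_contra hcon
    apply hne
    have hvz : ∀ i, waringNodeVal (a i) ((σ i : ℕ)) = 0 := by
      intro i
      have hni : i ∉ suppF a σ := fun hmem => hcon ⟨i, hmem⟩
      rw [suppF, Finset.mem_filter] at hni
      push_neg at hni
      have hz : sg a σ i = 0 := hni (Finset.mem_univ i)
      rw [waringNodeVal, show waringNodeSgn (a i) ((σ i : ℕ)) = 0 from hz, zero_mul]
    have hLz : waringL (fun i => waringNodeVal (a i) ((σ i : ℕ))) = 0 := by
      rw [waringL]
      apply Finset.sum_eq_zero
      intro i _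
      rw [hvz i, map_zero, zero_mul]
    rw [hF]
    simp only [hLz]
    rw [zero_pow (by omega), smul_zero]
  set π' : (∀ i, Fin (a i + 1)) → (∀ i, Fin (a i + 1)) := πmap a ha with hπ'
  set T : Finset (∀ i, Fin (a i + 1)) := S.image π' with hT
  set q : (∀ i, Fin (a i + 1)) → ℚ := fun σ => sg a σ (piv a σ) * 2 ^ (mexp a σ) with hq
  set Λ : (∀ i, Fin (a i + 1)) → ℚ := fun τ =>
    ∑ σ ∈ S.filter (fun σ' => π' σ' = τ), (∏ i, w i (σ i)) * (q σ) ^ d with hΛ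
  have hfib : ∑ τ ∈ T, ∑ σ ∈ S.filter (fun σ' => π' σ' = τ), F σ = ∑ σ ∈ S, F σ :=
    Finset.sum_fiberwise_of_maps_to (fun σ hσ => Finset.mem_image_of_mem π' hσ) F
  have hinner : ∀ τ ∈ T, ∑ σ ∈ S.filter (fun σ' => π' σ' = τ), F σ
      = Λ τ • (waringL (fun i => waringNodeVal (a i) ((τ i : ℕ)))) ^ d := by
    intro τ _
    rw [hΛ]
    rw [Finset.sum_smul]
    apply Finset.sum_congr rfl
    intro σ hσ
    rw [Finset.mem_filter] at hσ
    have hσS : σ ∈ S := hσ.1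
    have hσne : (suppF a σ).Nonempty := by
      rw [hS, Finset.mem_filter] at hσS
      exact hσS.2
    have hcol : (fun i => waringNodeVal (a i) ((σ i : ℕ)))
        = fun i => q σ * waringNodeVal (a i) ((τ i : ℕ)) := by
      funext i
      rw [← hσ.2]
      exact val_pi a ha σ hσne i
    rw [hF]
    simp only [hcol]
    rw [waringL_mul, mul_pow, ← map_pow, ← smul_eq_C_mul, smul_smul]
  rw [Finset.sum_congr rfl hinner] at hfib
  have hmain : (∏ i, (X i : MvPolynomial (Fin (n + 1)) ℚ) ^ a i)
      = ∑ τ ∈ T, (κ⁻¹ * Λ τ) • (waringL (fun i => waringNodeVal (a i) ((τ i : ℕ)))) ^ d := by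
    have h1 : κ⁻¹ • (κ • ∏ i, (X i : MvPolynomial (Fin (n + 1)) ℚ) ^ a i)
        = ∏ i, (X i : MvPolynomial (Fin (n + 1)) ℚ) ^ a i := by
      rw [smul_smul, inv_mul_cancel₀ (ne_of_gt hκpos), one_smul]
    rw [← h1, ← hres, ← hfib, Finset.smul_sum]
    exact Finset.sum_congr rfl fun τ _ => by rw [smul_smul]
  -- counting
  have hcount : ((T.card : ℚ)) ≤ (1 / 2) * ((∏ i, ((a i : ℚ) + 1)) - ∏ i, ((a i : ℚ) - 1)) := by
    have h1 : T.card ≤ ∑ p : Fin (n + 1), ∏ i,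
        (if i.val < p.val then a i - 1 else if i = p then 1 else a i + 1) := by
      rw [hT, hS]
      exact image_card_le a ha
    calc (T.card : ℚ) ≤ ((∑ p : Fin (n + 1), ∏ i,
          (if i.val < p.val then a i - 1 else if i = p then 1 else a i + 1) : ℕ) : ℚ) := by
          exact_mod_cast h1
      _ = ∑ p : Fin (n + 1), ∏ i,
          (if i.val < p.val then (a i : ℚ) - 1 else if i = p then 1 else (a i : ℚ) + 1) := by
          rw [Nat.cast_sum]
          apply Finset.sum_congr rfl
          intro p _
          rw [Nat.cast_prod]
          apply Finset.prod_congr rfl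
          intro i _
          by_cases h2 : i.val < p.val
          · rw [if_pos h2, if_pos h2, Nat.cast_sub (ha i)]
            norm_num
          · by_cases h3 : i = p
            · rw [if_neg h2, if_pos h3, if_neg h2, if_pos h3, Nat.cast_one]
            · rw [if_neg h2, if_neg h3, if_neg h2, if_neg h3]
              push_cast
              ring
      _ = _ := waring_telescope (fun i => (a i : ℚ))
  -- reindex by Fin r
  set r : ℕ := T.card with hr
  set e := T.equivFin with he
  refine ⟨r, fun j => κ⁻¹ * Λ ((e.symm j : _)),
    fun j => waringL (fun i => waringNodeVal (a i) ((((e.symm j : _) : ∀ i, Fin (a i + 1)) i : ℕ))),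
    ?_, ?_, ?_⟩
  · exact hcount
  · intro j
    exact waringL_isHomogeneous _
  · rw [hmain]
    rw [← Finset.sum_coe_sort T (fun τ => (κ⁻¹ * Λ τ) •
      (waringL (fun i => waringNodeVal (a i) ((τ i : ℕ)))) ^ d)]
    exact (Equiv.sum_comp e.symm (fun x : {x // x ∈ T} => (κ⁻¹ * Λ (x : _)) •
      (waringL (fun i => waringNodeVal (a i) ((((x : _) : ∀ i, Fin (a i + 1)) i : ℕ)))) ^ d)).symm
end
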